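/- arXiv:2105.05423 — 8 statements merged into one kernel-verified Lean document; each statement's English description precedes it below -/
import Mathlib

section
/- Let [a,b] ⊂ ℝ be a closed interval, C a symmetric 3×3 complex matrix, and D : ℝ → (3×3 complex matrices) continuous with D(τ) symmetric for every τ. Suppose H : ℝ → (3×3 complex matrices) is differentiable on [a,b] and satisfies the Riccati equation H'(τ) = −H(τ)·C·H(τ) − D(τ) for all τ ∈ [a,b], and that H(a) is symmetric. Then H(τ) is symmetric for every τ ∈ [a,b]. -/
/-!
Both `H` and its transpose `Hᵀ` solve the same Riccati equation, because transposition reverses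
products and fixes `C` and `D τ`; they agree at `a`. The Riccati vector field `M ↦ -(M C M) - D`
is Lipschitz on bounded sets, so the uniqueness theorem for ODE solutions forces `H = Hᵀ` on
`[a, b]`.
-/

open Set Matrix Metric
open scoped NNReal

section Riccati

variable {A : Type*} [NormedRing A]

theorem lipschitzOnWith_riccati (C D : A) (R : ℝ≥0) :
    LipschitzOnWith (2 * ‖C‖₊ * R) (fun M => -(M * C * M) - D) (closedBall 0 R) := by
  refine LipschitzOnWith.of_dist_le_mul fun M hM N hN => ?_
  rw [mem_closedBall_zero_iff] at hM hN
  have hdiff : -(M * C * M) - D - (-(N * C * N) - D) = -(M * C * (M - N)) - (M - N) * C * N := by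
    noncomm_ring
  have hC := norm_nonneg C
  have hMN := norm_nonneg (M - N)
  rw [dist_eq_norm, dist_eq_norm, hdiff]
  calc ‖-(M * C * (M - N)) - (M - N) * C * N‖
      ≤ ‖M‖ * ‖C‖ * ‖M - N‖ + ‖M - N‖ * ‖C‖ * ‖N‖ := by
        refine (norm_sub_le _ _).trans (add_le_add ?_ ?_)
        · rw [norm_neg]
          exact (norm_mul_le _ _).trans (by gcongr; exact norm_mul_le _ _)
        · exact (norm_mul_le _ _).trans (by gcongr; exact norm_mul_le _ _)
    _ ≤ R * ‖C‖ * ‖M - N‖ + ‖M - N‖ * ‖C‖ * R := by gcongr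
    _ = ↑(2 * ‖C‖₊ * R) * ‖M - N‖ := by push_cast; ring

variable [NormedSpace ℝ A]

theorem eqOn_Icc_of_hasDerivAt_riccati {C : A} {D : ℝ → A} {X Y : ℝ → A} {a b : ℝ}
    (hX : ∀ t ∈ Icc a b, HasDerivAt X (-(X t * C * X t) - D t) t)
    (hY : ∀ t ∈ Icc a b, HasDerivAt Y (-(Y t * C * Y t) - D t) t)
    (ha : X a = Y a) : EqOn X Y (Icc a b) := by
  have hXc : ContinuousOn X (Icc a b) := fun t ht => (hX t ht).continuousAt.continuousWithinAt
  have hYc : ContinuousOn Y (Icc a b) := fun t ht => (hY t ht).continuousAt.continuousWithinAt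
  obtain ⟨RX, hRX⟩ := isCompact_Icc.exists_bound_of_continuousOn hXc
  obtain ⟨RY, hRY⟩ := isCompact_Icc.exists_bound_of_continuousOn hYc
  have hR : max RX RY ≤ (max RX RY).toNNReal := Real.le_coe_toNNReal _
  refine ODE_solution_unique_of_mem_Icc_right (s := fun _ => closedBall 0 (max RX RY).toNNReal)
    (fun t _ => lipschitzOnWith_riccati C (D t) _) hXc
    (fun t ht => (hX t (Ico_subset_Icc_self ht)).hasDerivWithinAt) ?_ hYc
    (fun t ht => (hY t (Ico_subset_Icc_self ht)).hasDerivWithinAt) ?_ ha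
  · exact fun t ht => mem_closedBall_zero_iff.2 <|
      ((hRX t (Ico_subset_Icc_self ht)).trans (le_max_left _ _)).trans hR
  · exact fun t ht => mem_closedBall_zero_iff.2 <|
      ((hRY t (Ico_subset_Icc_self ht)).trans (le_max_right _ _)).trans hR

end Riccati

-- A submultiplicative matrix norm whose topology is definitionally the entrywise one.
attribute [local instance] Matrix.linftyOpNormedRing Matrix.linftyOpNormedSpace

theorem stmt_1_general (a b : ℝ)
    (C : Matrix (Fin 3) (Fin 3) ℂ) (hC : Cᵀ = C)
    (D : ℝ → Matrix (Fin 3) (Fin 3) ℂ)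
    (hDsymm : ∀ τ, (D τ)ᵀ = D τ)
    (H : ℝ → Matrix (Fin 3) (Fin 3) ℂ)
    (hH : ∀ τ ∈ Icc a b, ∀ i j, HasDerivAt (fun t => H t i j)
        ((-(H τ * C * H τ) - D τ) i j) τ)
    (hHa : (H a)ᵀ = H a) :
    ∀ τ ∈ Icc a b, (H τ)ᵀ = H τ := by
  have hHd : ∀ τ ∈ Icc a b, HasDerivAt H (-(H τ * C * H τ) - D τ) τ := fun τ hτ =>
    hasDerivAt_pi.2 fun i => hasDerivAt_pi.2 fun j => hH τ hτ i j
  have hHtd : ∀ τ ∈ Icc a b,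
      HasDerivAt (fun t => (H t)ᵀ) (-((H τ)ᵀ * C * (H τ)ᵀ) - D τ) τ := by
    intro τ hτ
    have hT : (-((H τ)ᵀ * C * (H τ)ᵀ) - D τ) = (-(H τ * C * H τ) - D τ)ᵀ := by
      rw [transpose_sub, transpose_neg, hDsymm, transpose_mul, transpose_mul, hC, mul_assoc]
    rw [hT]
    exact hasDerivAt_pi.2 fun i => hasDerivAt_pi.2 fun j => hH τ hτ j i
  exact fun τ hτ => eqOn_Icc_of_hasDerivAt_riccati hHtd hHd hHa hτ

/-- If H solves the Riccati equation H' = −H·C·H − D on [a,b], with C and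
every D(τ) symmetric (and D continuous), and H(a) is symmetric, then H(τ) is symmetric
for every τ ∈ [a,b].  Derivatives are entrywise. -/
theorem stmt_1 (a b : ℝ) (hab : a ≤ b)
    (C : Matrix (Fin 3) (Fin 3) ℂ) (hC : Cᵀ = C)
    (D : ℝ → Matrix (Fin 3) (Fin 3) ℂ) (hD : Continuous D)
    (hDsymm : ∀ τ, (D τ)ᵀ = D τ)
    (H : ℝ → Matrix (Fin 3) (Fin 3) ℂ)
    (hH : ∀ τ ∈ Icc a b, ∀ i j, HasDerivAt (fun t => H t i j)
        ((-(H τ * C * H τ) - D τ) i j) τ)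
    (hHa : (H a)ᵀ = H a) :
    ∀ τ ∈ Icc a b, (H τ)ᵀ = H τ :=
  stmt_1_general a b C hC D hDsymm H hH hHa
end

section
/- Let C = diag(0,2,2) regarded as a 3×3 complex matrix, and let D : ℝ → (3×3 complex matrices) be continuous with each D(τ) symmetric and having all entries real. Suppose Y, Z : ℝ → (3×3 complex matrices) are differentiable on a closed interval [a,b] and satisfy Y'(τ) = C·Z(τ) and Z'(τ) = −D(τ)·Y(τ) there, that Y(a) is invertible, and that H₀ := Z(a)·Y(a)⁻¹ is symmetric with Im H₀ positive definite. Then Y(τ) is invertible for every τ ∈ [a,b]. -/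
open Set Matrix

/-! If `Y' = C Z`, `Z' = -D Y` with `C`, `D` Hermitian, then for every vector `v` the quantity
`ω(Y v, Z v)`, where `ω(y, z) = y* z - z* y`, is constant in `τ`. At `τ = a` we have
`Z(a) v = H₀ u` with `u = Y(a) v`, and symmetry of `H₀` turns `ω(u, H₀ u)` into
`2i · u* (Im H₀) u`, which is nonzero unless `u = 0`. Hence `Y(τ) v = 0` forces `Y(a) v = 0`,
i.e. `v = 0`. -/

def imPart (M : Matrix (Fin 3) (Fin 3) ℂ) : Matrix (Fin 3) (Fin 3) ℝ :=
  Matrix.of fun i j => (M i j).im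

def wronskian {R n : Type*} [NonUnitalNonAssocRing R] [Star R] [Fintype n] (y z : n → R) : R :=
  star y ⬝ᵥ z - star z ⬝ᵥ y

section Conservation

variable {𝕜 : Type*} [RCLike 𝕜] {m n : Type*} [Fintype n]

theorem hasDerivAt_mulVec_apply {A : ℝ → Matrix m n 𝕜} {A' : Matrix m n 𝕜} {τ : ℝ}
    (hA : ∀ i j, HasDerivAt (fun t => A t i j) (A' i j) τ) (v : n → 𝕜) (i : m) :
    HasDerivAt (fun t => (A t *ᵥ v) i) ((A' *ᵥ v) i) τ := by
  simp only [mulVec, dotProduct]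
  exact HasDerivAt.fun_sum fun j _ => (hA i j).mul_const (v j)

theorem hasDerivAt_star_dotProduct {x y : ℝ → n → 𝕜} {x' y' : n → 𝕜} {τ : ℝ}
    (hx : ∀ i, HasDerivAt (fun t => x t i) (x' i) τ)
    (hy : ∀ i, HasDerivAt (fun t => y t i) (y' i) τ) :
    HasDerivAt (fun t => star (x t) ⬝ᵥ y t)
      (star x' ⬝ᵥ y τ + star (x τ) ⬝ᵥ y') τ := by
  simp only [dotProduct, Pi.star_apply, ← Finset.sum_add_distrib]
  exact HasDerivAt.fun_sum fun i _ => (hx i).star.mul (hy i)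

theorem hasDerivAt_wronskian_eq_zero {C D : Matrix n n 𝕜} (hC : C.IsHermitian)
    (hD : D.IsHermitian) {y z : ℝ → n → 𝕜} {τ : ℝ}
    (hy : ∀ i, HasDerivAt (fun t => y t i) ((C *ᵥ z τ) i) τ)
    (hz : ∀ i, HasDerivAt (fun t => z t i) ((-(D *ᵥ y τ)) i) τ) :
    HasDerivAt (fun t => wronskian (y t) (z t)) 0 τ := by
  refine ((hasDerivAt_star_dotProduct hy hz).fun_sub
    (hasDerivAt_star_dotProduct hz hy)).congr_deriv ?_
  simp only [star_neg, star_mulVec, hC.eq, hD.eq, neg_dotProduct, dotProduct_neg,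
    ← dotProduct_mulVec]
  abel

theorem wronskian_mulVec_eq_of_hamiltonian {C : Matrix n n 𝕜} {D : ℝ → Matrix n n 𝕜}
    {Y Z : ℝ → Matrix n n 𝕜} {a b : ℝ} (hC : C.IsHermitian)
    (hD : ∀ t ∈ Icc a b, (D t).IsHermitian)
    (hY : ∀ t ∈ Icc a b, ∀ i j, HasDerivAt (fun s => Y s i j) ((C * Z t) i j) t)
    (hZ : ∀ t ∈ Icc a b, ∀ i j, HasDerivAt (fun s => Z s i j) ((-(D t * Y t)) i j) t)
    (v : n → 𝕜) {τ : ℝ} (hτ : τ ∈ Icc a b) :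
    wronskian (Y τ *ᵥ v) (Z τ *ᵥ v) = wronskian (Y a *ᵥ v) (Z a *ᵥ v) := by
  have hω : ∀ t ∈ Icc a b, HasDerivAt (fun s => wronskian (Y s *ᵥ v) (Z s *ᵥ v)) 0 t := by
    intro t ht
    refine hasDerivAt_wronskian_eq_zero hC (hD t ht) (fun i => ?_) (fun i => ?_)
    · simpa only [mulVec_mulVec] using hasDerivAt_mulVec_apply (hY t ht) v i
    · simpa only [neg_mulVec, mulVec_mulVec] using hasDerivAt_mulVec_apply (hZ t ht) v i
  exact constant_of_has_deriv_right_zero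
    (fun t ht => (hω t ht).continuousAt.continuousWithinAt)
    (fun t ht => (hω t (Ico_subset_Icc_self ht)).hasDerivWithinAt) τ hτ

end Conservation

section ImaginaryPart

variable {n : Type*}

theorem sub_conjTranspose_of_transpose_eq {H : Matrix n n ℂ} (hH : Hᵀ = H) :
    H - Hᴴ = (2 * Complex.I) • (H.map Complex.im).map Complex.ofReal := by
  ext i j
  have hji : H j i = H i j := congrFun (congrFun hH i) j
  rw [Matrix.sub_apply, conjTranspose_apply, hji, Complex.star_def, Complex.sub_conj]
  simp only [Matrix.smul_apply, map_apply, smul_eq_mul]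
  push_cast
  ring

theorem isHermitian_of_transpose_eq_of_im_eq_zero {M : Matrix n n ℂ} (hT : Mᵀ = M)
    (him : ∀ i j, (M i j).im = 0) : M.IsHermitian := by
  ext i j
  rw [conjTranspose_apply, Complex.star_def, Complex.conj_eq_iff_im.mpr (him j i)]
  exact congrFun (congrFun hT i) j

variable [Fintype n]

theorem re_star_dotProduct_map_ofReal_mulVec (A : Matrix n n ℝ) (u : n → ℂ) :
    (star u ⬝ᵥ (A.map Complex.ofReal *ᵥ u)).re =
      (fun k => (u k).re) ⬝ᵥ (A *ᵥ fun k => (u k).re) +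
        (fun k => (u k).im) ⬝ᵥ (A *ᵥ fun k => (u k).im) := by
  simp [dotProduct, mulVec, Complex.re_sum, Finset.mul_sum, ← Finset.sum_add_distrib]

theorem Matrix.PosDef.re_star_dotProduct_map_ofReal_mulVec_pos {A : Matrix n n ℝ}
    (hA : A.PosDef) {u : n → ℂ} (hu : u ≠ 0) :
    0 < (star u ⬝ᵥ (A.map Complex.ofReal *ᵥ u)).re := by
  rw [re_star_dotProduct_map_ofReal_mulVec]
  set x : n → ℝ := fun k => (u k).re
  set y : n → ℝ := fun k => (u k).im
  have hx := hA.posSemidef.dotProduct_mulVec_nonneg x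
  have hy := hA.posSemidef.dotProduct_mulVec_nonneg y
  simp only [star_trivial] at hx hy
  by_cases hx0 : x = 0
  · have hy0 : y ≠ 0 := fun hy0 =>
      hu (funext fun k => Complex.ext (congrFun hx0 k) (congrFun hy0 k))
    have := hA.dotProduct_mulVec_pos hy0
    simp only [star_trivial] at this
    linarith
  · have := hA.dotProduct_mulVec_pos hx0
    simp only [star_trivial] at this
    linarith

theorem wronskian_mulVec_ne_zero {H : Matrix n n ℂ} (hH : Hᵀ = H)
    (hA : (H.map Complex.im).PosDef) {u : n → ℂ} (hu : u ≠ 0) :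
    wronskian u (H *ᵥ u) ≠ 0 := by
  have hω : wronskian u (H *ᵥ u) =
      2 * Complex.I * (star u ⬝ᵥ ((H.map Complex.im).map Complex.ofReal *ᵥ u)) := by
    rw [wronskian, star_mulVec, ← dotProduct_mulVec, ← dotProduct_sub, ← sub_mulVec,
      sub_conjTranspose_of_transpose_eq hH, smul_mulVec, dotProduct_smul, smul_eq_mul]
  rw [hω]
  refine mul_ne_zero (by simp) fun h => ?_
  have := hA.re_star_dotProduct_map_ofReal_mulVec_pos hu
  rw [h, Complex.zero_re] at this
  exact this.false

end ImaginaryPart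

theorem stmt_2_general (a b : ℝ)
    (D : ℝ → Matrix (Fin 3) (Fin 3) ℂ)
    (hDsymm : ∀ τ, (D τ)ᵀ = D τ) (hDreal : ∀ τ i j, (D τ i j).im = 0)
    (Y Z : ℝ → Matrix (Fin 3) (Fin 3) ℂ)
    (hY : ∀ τ ∈ Icc a b, ∀ i j, HasDerivAt (fun t => Y t i j)
        (((Matrix.diagonal ![0, 2, 2] : Matrix (Fin 3) (Fin 3) ℂ) * Z τ) i j) τ)
    (hZ : ∀ τ ∈ Icc a b, ∀ i j, HasDerivAt (fun t => Z t i j) ((-(D τ * Y τ)) i j) τ)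
    (hYa : IsUnit (Y a))
    (hH0symm : (Z a * (Y a)⁻¹)ᵀ = Z a * (Y a)⁻¹)
    (hH0pos : (imPart (Z a * (Y a)⁻¹)).PosDef) :
    ∀ τ ∈ Icc a b, IsUnit (Y τ) := by
  intro τ hτ
  have hC : (Matrix.diagonal ![0, 2, 2] : Matrix (Fin 3) (Fin 3) ℂ).IsHermitian :=
    isHermitian_diagonal_iff.mpr fun i => by fin_cases i <;> simp
  have hD : ∀ t ∈ Icc a b, (D t).IsHermitian := fun t _ =>
    isHermitian_of_transpose_eq_of_im_eq_zero (hDsymm t) (hDreal t)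
  rw [isUnit_iff_isUnit_det, isUnit_iff_ne_zero, Ne, ← exists_mulVec_eq_zero_iff]
  rintro ⟨v, hv, hYv⟩
  have hu : Y a *ᵥ v ≠ 0 := fun h =>
    hv (mulVec_injective_of_isUnit hYa (h.trans (mulVec_zero _).symm))
  have hZa : Z a *ᵥ v = (Z a * (Y a)⁻¹) *ᵥ (Y a *ᵥ v) := by
    rw [mulVec_mulVec, nonsing_inv_mul_cancel_right _ _ ((isUnit_iff_isUnit_det _).mp hYa)]
  have hω := wronskian_mulVec_eq_of_hamiltonian hC hD hY hZ v hτ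
  rw [hYv, hZa, wronskian, star_zero, zero_dotProduct, dotProduct_zero, sub_zero] at hω
  exact wronskian_mulVec_ne_zero hH0symm hH0pos hu hω.symm

/-- With C = diag(0,2,2), D continuous, symmetric and real-valued,
if Y' = C·Z, Z' = −D·Y on [a,b], Y(a) is invertible and H₀ = Z(a)·Y(a)⁻¹ is symmetric
with Im H₀ positive definite, then Y(τ) is invertible for every τ ∈ [a,b]. -/
theorem stmt_2 (a b : ℝ) (hab : a ≤ b)
    (D : ℝ → Matrix (Fin 3) (Fin 3) ℂ) (hD : Continuous D)
    (hDsymm : ∀ τ, (D τ)ᵀ = D τ) (hDreal : ∀ τ i j, (D τ i j).im = 0)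
    (Y Z : ℝ → Matrix (Fin 3) (Fin 3) ℂ)
    (hY : ∀ τ ∈ Icc a b, ∀ i j, HasDerivAt (fun t => Y t i j)
        (((Matrix.diagonal ![0, 2, 2] : Matrix (Fin 3) (Fin 3) ℂ) * Z τ) i j) τ)
    (hZ : ∀ τ ∈ Icc a b, ∀ i j, HasDerivAt (fun t => Z t i j) ((-(D τ * Y τ)) i j) τ)
    (hYa : IsUnit (Y a))
    (hH0symm : (Z a * (Y a)⁻¹)ᵀ = Z a * (Y a)⁻¹)
    (hH0pos : (imPart (Z a * (Y a)⁻¹)).PosDef) :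
    ∀ τ ∈ Icc a b, IsUnit (Y τ) :=
  stmt_2_general a b D hDsymm hDreal Y Z hY hZ hYa hH0symm hH0pos
end

section
/- Let C = diag(0,2,2) regarded as a 3×3 complex matrix, and let D : ℝ → (3×3 complex matrices) be continuous with each D(τ) symmetric and having all entries real. Suppose Y, Z : ℝ → (3×3 complex matrices) are differentiable on a closed interval [a,b], satisfy Y'(τ) = C·Z(τ) and Z'(τ) = −D(τ)·Y(τ) on [a,b], Y(τ) is invertible for every τ ∈ [a,b], and H(a) := Z(a)·Y(a)⁻¹ is symmetric with Im H(a) positive definite, where H(τ) := Z(τ)·Y(τ)⁻¹. Then Im H(τ) is positive definite for every τ ∈ [a,b]. -/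
/-!
For the Hamiltonian system `Y' = C Z`, `Z' = -D Y` with `C`, `D` real symmetric, the product
rule shows that both `Zᵀ Y - Yᵀ Z` and `Zᴴ Y - Yᴴ Z` are constant in time. The first vanishes at
`a` because `H(a) = Z(a) Y(a)⁻¹` is symmetric, so `H(τ)` stays symmetric. For symmetric `H` one
has `Hᴴ - H = -2i Im H`, so the second conserved quantity is `-2i Yᴴ (Im H) Y`: the
complexification of `Im H(τ)` is congruent to that of `Im H(a)`, and congruence preserves
positive definiteness.
-/

open Set Matrix

variable {𝕜 : Type*} [RCLike 𝕜] {l m n : Type*}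

def HasMatrixDerivAt (F : ℝ → Matrix l n 𝕜) (F' : Matrix l n 𝕜) (t : ℝ) : Prop :=
  ∀ i j, HasDerivAt (fun s => F s i j) (F' i j) t

namespace HasMatrixDerivAt

variable {t : ℝ}

theorem mul [Fintype m] {F : ℝ → Matrix l m 𝕜} {G : ℝ → Matrix m n 𝕜}
    {F' : Matrix l m 𝕜} {G' : Matrix m n 𝕜} (hF : HasMatrixDerivAt F F' t)
    (hG : HasMatrixDerivAt G G' t) :
    HasMatrixDerivAt (fun s => F s * G s) (F' * G t + F t * G') t := by
  intro i j
  simp only [mul_apply, Matrix.add_apply, ← Finset.sum_add_distrib]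
  exact HasDerivAt.fun_sum fun k _ => (hF i k).fun_mul (hG k j)

theorem sub {F G : ℝ → Matrix l n 𝕜} {F' G' : Matrix l n 𝕜} (hF : HasMatrixDerivAt F F' t)
    (hG : HasMatrixDerivAt G G' t) : HasMatrixDerivAt (fun s => F s - G s) (F' - G') t :=
  fun i j => (hF i j).sub (hG i j)

theorem transpose {F : ℝ → Matrix l n 𝕜} {F' : Matrix l n 𝕜}
    (hF : HasMatrixDerivAt F F' t) : HasMatrixDerivAt (fun s => (F s)ᵀ) F'ᵀ t :=
  fun i j => hF j i

theorem conjTranspose {F : ℝ → Matrix l n 𝕜} {F' : Matrix l n 𝕜}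
    (hF : HasMatrixDerivAt F F' t) : HasMatrixDerivAt (fun s => (F s)ᴴ) F'ᴴ t :=
  fun i j => (hF j i).star

end HasMatrixDerivAt

theorem eq_of_hasMatrixDerivAt_zero {F : ℝ → Matrix l n 𝕜} {a b : ℝ}
    (hF : ∀ t ∈ Icc a b, HasMatrixDerivAt F 0 t) : ∀ t ∈ Icc a b, F t = F a := fun t ht =>
  Matrix.ext fun i j => constant_of_has_deriv_right_zero
    (fun s hs => (hF s hs i j).continuousAt.continuousWithinAt)
    (fun s hs => (hF s (Ico_subset_Icc_self hs) i j).hasDerivWithinAt) t ht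

section HamiltonianSystem

variable [Fintype n] {C D : Matrix n n 𝕜} {Y Z : ℝ → Matrix n m 𝕜} {t : ℝ}

theorem hasMatrixDerivAt_transpose_mul_sub (hC : Cᵀ = C) (hD : Dᵀ = D)
    (hY : HasMatrixDerivAt Y (C * Z t) t) (hZ : HasMatrixDerivAt Z (-(D * Y t)) t) :
    HasMatrixDerivAt (fun s => (Z s)ᵀ * Y s - (Y s)ᵀ * Z s) 0 t := by
  convert (hZ.transpose.mul hY).sub (hY.transpose.mul hZ) using 1
  simp only [transpose_neg, transpose_mul, hC, hD, Matrix.mul_assoc, Matrix.neg_mul,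
    Matrix.mul_neg]
  abel

theorem hasMatrixDerivAt_conjTranspose_mul_sub (hC : Cᴴ = C) (hD : Dᴴ = D)
    (hY : HasMatrixDerivAt Y (C * Z t) t) (hZ : HasMatrixDerivAt Z (-(D * Y t)) t) :
    HasMatrixDerivAt (fun s => (Z s)ᴴ * Y s - (Y s)ᴴ * Z s) 0 t := by
  convert (hZ.conjTranspose.mul hY).sub (hY.conjTranspose.mul hZ) using 1
  simp only [conjTranspose_neg, conjTranspose_mul, hC, hD, Matrix.mul_assoc, Matrix.neg_mul,
    Matrix.mul_neg]
  abel

end HamiltonianSystem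

section Algebra

variable {α : Type*} [CommRing α] [Fintype n] [DecidableEq n] {Y Z : Matrix n n α}

theorem transpose_mul_inv_eq_self_iff (hY : IsUnit Y) :
    (Z * Y⁻¹)ᵀ = Z * Y⁻¹ ↔ Zᵀ * Y = Yᵀ * Z := by
  have hdet := (isUnit_iff_isUnit_det Y).mp hY
  obtain ⟨H, rfl⟩ : ∃ H, Z = H * Y := ⟨Z * Y⁻¹, (nonsing_inv_mul_cancel_right Y Z hdet).symm⟩
  rw [mul_nonsing_inv_cancel_right Y H hdet, transpose_mul, Matrix.mul_assoc,
    ((isUnit_transpose Y).mpr hY).mul_right_inj, hY.mul_left_inj]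

theorem conjTranspose_mul_sub_conjTranspose_mul [StarRing α] (hY : IsUnit Y) :
    Zᴴ * Y - Yᴴ * Z = Yᴴ * ((Z * Y⁻¹)ᴴ - Z * Y⁻¹) * Y := by
  conv_lhs => rw [← nonsing_inv_mul_cancel_right Y Z ((isUnit_iff_isUnit_det Y).mp hY)]
  simp only [conjTranspose_mul, Matrix.mul_sub, Matrix.sub_mul, Matrix.mul_assoc]

end Algebra

section ComplexMatrix

open Complex
open scoped ComplexOrder

theorem conjTranspose_sub_self_of_transpose_eq {M : Matrix n n ℂ} (hM : Mᵀ = M) :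
    Mᴴ - M = (-2 * I) • (M.map im).map ofReal := by
  ext i j
  have hji : M j i = M i j := congrFun (congrFun hM i) j
  simp only [Matrix.sub_apply, conjTranspose_apply, Matrix.smul_apply, map_apply, hji,
    smul_eq_mul, star_def]
  have h := sub_conj (M i j)
  push_cast at h ⊢
  linear_combination -h

theorem dotProduct_map_ofReal_mulVec [Fintype n] {M : Matrix n n ℝ} (hM : Mᵀ = M) (w : n → ℂ) :
    star w ⬝ᵥ M.map ofReal *ᵥ w =
      ((fun i => (w i).re) ⬝ᵥ M *ᵥ (fun i => (w i).re) +
        (fun i => (w i).im) ⬝ᵥ M *ᵥ (fun i => (w i).im) : ℝ) := by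
  have hM' : ∀ i j, M j i = M i j := fun i j => congrFun (congrFun hM i) j
  apply Complex.ext
  · simp [dotProduct, mulVec, Finset.mul_sum, ← Finset.sum_add_distrib]
  · have hswap : ∑ x, ∑ y, (w x).im * (M x y * (w y).re) =
        ∑ x, ∑ y, (w x).re * (M x y * (w y).im) := by
      rw [Finset.sum_comm]
      refine Finset.sum_congr rfl fun x _ => Finset.sum_congr rfl fun y _ => ?_
      rw [hM']
      ring
    simp [dotProduct, mulVec, Finset.mul_sum, Finset.sum_add_distrib, hswap]

theorem posDef_map_ofReal_iff [Fintype n] {M : Matrix n n ℝ} :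
    (M.map ofReal).PosDef ↔ M.PosDef := by
  have hstar : Function.Semiconj ofReal star star := fun x => (conj_ofReal x).symm
  simp only [posDef_iff_dotProduct_mulVec, isHermitian_map_iff hstar ofReal_injective,
    star_trivial]
  refine and_congr_right fun hM => ?_
  have hMt : Mᵀ = M := (conjTranspose_eq_transpose_of_trivial M).symm.trans hM
  refine ⟨fun h x hx => ?_, fun h w hw => ?_⟩
  · have hx' : (fun i => (x i : ℂ)) ≠ 0 := by simpa [funext_iff] using hx
    simpa [dotProduct_map_ofReal_mulVec hMt] using h hx'
  · rw [dotProduct_map_ofReal_mulVec hMt, zero_lt_real]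
    have hnonneg (x : n → ℝ) : 0 ≤ x ⬝ᵥ M *ᵥ x := by
      rcases eq_or_ne x 0 with rfl | hx
      · simp
      · exact (h hx).le
    have hre_or_im : (fun i => (w i).re) ≠ 0 ∨ (fun i => (w i).im) ≠ 0 := by
      by_contra! ⟨hre, him⟩
      exact hw (funext fun i => Complex.ext (congrFun hre i) (congrFun him i))
    rcases hre_or_im with hre | him
    · exact add_pos_of_pos_of_nonneg (h hre) (hnonneg _)
    · exact add_pos_of_nonneg_of_pos (hnonneg _) (h him)

end ComplexMatrix

section RiccatiFlow

open Complex
open scoped ComplexOrder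

variable [Fintype n] [DecidableEq n]

theorem conjTranspose_mul_sub_conjTranspose_mul_eq_smul {Y Z : Matrix n n ℂ} (hY : IsUnit Y)
    (hH : (Z * Y⁻¹)ᵀ = Z * Y⁻¹) :
    Zᴴ * Y - Yᴴ * Z = (-2 * I) • (star Y * ((Z * Y⁻¹).map im).map ofReal * Y) := by
  rw [conjTranspose_mul_sub_conjTranspose_mul hY, conjTranspose_sub_self_of_transpose_eq hH,
    Matrix.mul_smul, Matrix.smul_mul, star_eq_conjTranspose]

variable {a b : ℝ} {C : Matrix n n ℂ} {D Y Z : ℝ → Matrix n n ℂ}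

theorem transpose_mul_inv_eq_self_of_hasMatrixDerivAt (hC : Cᵀ = C)
    (hD : ∀ t ∈ Icc a b, (D t)ᵀ = D t) (hY : ∀ t ∈ Icc a b, HasMatrixDerivAt Y (C * Z t) t)
    (hZ : ∀ t ∈ Icc a b, HasMatrixDerivAt Z (-(D t * Y t)) t)
    (hYinv : ∀ t ∈ Icc a b, IsUnit (Y t)) (hHa : (Z a * (Y a)⁻¹)ᵀ = Z a * (Y a)⁻¹) :
    ∀ t ∈ Icc a b, (Z t * (Y t)⁻¹)ᵀ = Z t * (Y t)⁻¹ := by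
  intro t ht
  have ha : a ∈ Icc a b := ⟨le_rfl, ht.1.trans ht.2⟩
  have hW := eq_of_hasMatrixDerivAt_zero
    (fun s hs => hasMatrixDerivAt_transpose_mul_sub hC (hD s hs) (hY s hs) (hZ s hs)) t ht
  rw [transpose_mul_inv_eq_self_iff (hYinv a ha), ← sub_eq_zero] at hHa
  rwa [transpose_mul_inv_eq_self_iff (hYinv t ht), ← sub_eq_zero, hW]

theorem posDef_map_im_mul_inv_of_hasMatrixDerivAt (hCt : Cᵀ = C) (hCh : Cᴴ = C)
    (hDt : ∀ t ∈ Icc a b, (D t)ᵀ = D t) (hDh : ∀ t ∈ Icc a b, (D t)ᴴ = D t)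
    (hY : ∀ t ∈ Icc a b, HasMatrixDerivAt Y (C * Z t) t)
    (hZ : ∀ t ∈ Icc a b, HasMatrixDerivAt Z (-(D t * Y t)) t)
    (hYinv : ∀ t ∈ Icc a b, IsUnit (Y t)) (hHa : (Z a * (Y a)⁻¹)ᵀ = Z a * (Y a)⁻¹)
    (hpos : ((Z a * (Y a)⁻¹).map im).PosDef) :
    ∀ t ∈ Icc a b, ((Z t * (Y t)⁻¹).map im).PosDef := by
  intro t ht
  have ha : a ∈ Icc a b := ⟨le_rfl, ht.1.trans ht.2⟩
  have hHt := transpose_mul_inv_eq_self_of_hasMatrixDerivAt hCt hDt hY hZ hYinv hHa t ht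
  have hV := eq_of_hasMatrixDerivAt_zero (fun s hs =>
    hasMatrixDerivAt_conjTranspose_mul_sub hCh (hDh s hs) (hY s hs) (hZ s hs)) t ht
  rw [conjTranspose_mul_sub_conjTranspose_mul_eq_smul (hYinv t ht) hHt,
    conjTranspose_mul_sub_conjTranspose_mul_eq_smul (hYinv a ha) hHa] at hV
  have hconj := smul_right_injective _ (mul_ne_zero (by norm_num) I_ne_zero) hV
  rw [← posDef_map_ofReal_iff, ← IsUnit.posDef_star_left_conjugate_iff (hYinv t ht), hconj,
    IsUnit.posDef_star_left_conjugate_iff (hYinv a ha), posDef_map_ofReal_iff]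
  exact hpos

end RiccatiFlow

theorem stmt_3_general (a b : ℝ)
    (D : ℝ → Matrix (Fin 3) (Fin 3) ℂ)
    (hDsymm : ∀ τ, (D τ)ᵀ = D τ) (hDreal : ∀ τ i j, (D τ i j).im = 0)
    (Y Z : ℝ → Matrix (Fin 3) (Fin 3) ℂ)
    (hY : ∀ τ ∈ Icc a b, ∀ i j, HasDerivAt (fun t => Y t i j)
        (((Matrix.diagonal ![0, 2, 2] : Matrix (Fin 3) (Fin 3) ℂ) * Z τ) i j) τ)
    (hZ : ∀ τ ∈ Icc a b, ∀ i j, HasDerivAt (fun t => Z t i j) ((-(D τ * Y τ)) i j) τ)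
    (hYinv : ∀ τ ∈ Icc a b, IsUnit (Y τ))
    (hHasymm : (Z a * (Y a)⁻¹)ᵀ = Z a * (Y a)⁻¹)
    (hHapos : (imPart (Z a * (Y a)⁻¹)).PosDef) :
    ∀ τ ∈ Icc a b, (imPart (Z τ * (Y τ)⁻¹)).PosDef := by
  have hCh : (Matrix.diagonal ![0, 2, 2] : Matrix (Fin 3) (Fin 3) ℂ)ᴴ =
      Matrix.diagonal ![0, 2, 2] := by
    simp [diagonal_conjTranspose, Fin.forall_fin_succ, Complex.conj_ofNat]
  have hDh (τ : ℝ) : (D τ)ᴴ = D τ := by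
    conv_rhs => rw [← hDsymm τ]
    ext i j
    exact Complex.conj_eq_iff_im.mpr (hDreal τ j i)
  exact posDef_map_im_mul_inv_of_hasMatrixDerivAt (diagonal_transpose _) hCh
    (fun τ _ => hDsymm τ) (fun τ _ => hDh τ) hY hZ hYinv hHasymm hHapos

/-- With C = diag(0,2,2), D continuous, symmetric and real-valued,
if Y' = C·Z, Z' = −D·Y on [a,b], Y(τ) is invertible on [a,b], and
H(a) = Z(a)·Y(a)⁻¹ is symmetric with Im H(a) positive definite, then
Im H(τ) = Im (Z(τ)·Y(τ)⁻¹) is positive definite for every τ ∈ [a,b]. -/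
theorem stmt_3 (a b : ℝ) (hab : a ≤ b)
    (D : ℝ → Matrix (Fin 3) (Fin 3) ℂ) (hD : Continuous D)
    (hDsymm : ∀ τ, (D τ)ᵀ = D τ) (hDreal : ∀ τ i j, (D τ i j).im = 0)
    (Y Z : ℝ → Matrix (Fin 3) (Fin 3) ℂ)
    (hY : ∀ τ ∈ Icc a b, ∀ i j, HasDerivAt (fun t => Y t i j)
        (((Matrix.diagonal ![0, 2, 2] : Matrix (Fin 3) (Fin 3) ℂ) * Z τ) i j) τ)
    (hZ : ∀ τ ∈ Icc a b, ∀ i j, HasDerivAt (fun t => Z t i j) ((-(D τ * Y τ)) i j) τ)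
    (hYinv : ∀ τ ∈ Icc a b, IsUnit (Y τ))
    (hHasymm : (Z a * (Y a)⁻¹)ᵀ = Z a * (Y a)⁻¹)
    (hHapos : (imPart (Z a * (Y a)⁻¹)).PosDef) :
    ∀ τ ∈ Icc a b, (imPart (Z τ * (Y τ)⁻¹)).PosDef :=
  stmt_3_general a b D hDsymm hDreal Y Z hY hZ hYinv hHasymm hHapos
end

section
/- Let A be a 3×3 real symmetric positive definite matrix and let f : ℝ³ → ℂ be a bounded continuous function. Then lim_{ρ→∞} ρ^{3/2} ∫_{ℝ³} f(z) · exp(−ρ ⟨z, A z⟩) dz = f(0) · π^{3/2} · (det A)^{−1/2}. -/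
/-!
The exponent is homogeneous of degree 2, so the substitution `z = y / √ρ` turns
`ρ^{3/2} ∫ f(z) e^{-ρ⟨z,Az⟩} dz` into `∫ f(y / √ρ) e^{-⟨y,Ay⟩} dy`, which tends to
`f(0) ∫ e^{-⟨y,Ay⟩} dy` by dominated convergence. Writing `A = BᵀB`, the substitution `w = By`
reduces this Gaussian integral to the standard one, `π^{3/2}`, with Jacobian
`|det B|⁻¹ = (det A)^{-1/2}`.
-/

open MeasureTheory Matrix Filter Real

section ChangeOfVariables

variable {ι : Type*} [Fintype ι] [DecidableEq ι] {B : Matrix ι ι ℝ}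

theorem measurableEmbedding_mulVec (hB : B.det ≠ 0) : MeasurableEmbedding (B *ᵥ ·) :=
  (B.toLinearEquiv' (B.invertibleOfIsUnitDet hB.isUnit)).toContinuousLinearEquiv.toHomeomorph
    |>.measurableEmbedding

theorem map_mulVec_volume (hB : B.det ≠ 0) :
    Measure.map (B *ᵥ ·) volume = ENNReal.ofReal |B.det|⁻¹ • volume := by
  rw [← abs_inv]
  exact Real.map_matrix_volume_pi_eq_smul_volume_pi hB

variable {E : Type*} [NormedAddCommGroup E]

theorem integrable_comp_mulVec_iff (hB : B.det ≠ 0) {g : (ι → ℝ) → E} :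
    Integrable (fun z ↦ g (B *ᵥ z)) ↔ Integrable g := by
  change Integrable (g ∘ (B *ᵥ ·)) _ ↔ _
  rw [← (measurableEmbedding_mulVec hB).integrable_map_iff, map_mulVec_volume hB,
    integrable_smul_measure (by simpa using hB) ENNReal.ofReal_ne_top]

theorem integral_comp_mulVec [NormedSpace ℝ E] (hB : B.det ≠ 0) (g : (ι → ℝ) → E) :
    ∫ z, g (B *ᵥ z) = |B.det|⁻¹ • ∫ z, g z := by
  rw [← (measurableEmbedding_mulVec hB).integral_map, map_mulVec_volume hB,
    integral_smul_measure, ENNReal.toReal_ofReal (by positivity)]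

end ChangeOfVariables

section Gaussian

variable {ι : Type*} [Fintype ι]

theorem exp_neg_dotProduct_self (w : ι → ℝ) : exp (-(w ⬝ᵥ w)) = ∏ i, exp (-1 * w i ^ 2) := by
  simp [dotProduct, ← Real.exp_sum, sq]

theorem integrable_exp_neg_dotProduct_self : Integrable fun w : ι → ℝ ↦ exp (-(w ⬝ᵥ w)) := by
  simp_rw [exp_neg_dotProduct_self]
  exact Integrable.fintype_prod (f := fun _ v ↦ exp (-1 * v ^ 2))
    fun _ ↦ integrable_exp_neg_mul_sq one_pos

theorem integral_exp_neg_dotProduct_self :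
    ∫ w : ι → ℝ, exp (-(w ⬝ᵥ w)) = π ^ ((Fintype.card ι : ℝ) / 2) := by
  simp_rw [exp_neg_dotProduct_self]
  rw [integral_fintype_prod_volume_eq_prod (f := fun _ v ↦ exp (-1 * v ^ 2))]
  simp only [integral_gaussian, div_one, Finset.prod_const, Finset.card_univ]
  rw [Real.sqrt_eq_rpow, ← Real.rpow_natCast, ← Real.rpow_mul pi_pos.le, one_div_mul_eq_div]

theorem dotProduct_transpose_mul_self_mulVec (B : Matrix ι ι ℝ) (z : ι → ℝ) :
    z ⬝ᵥ (Bᵀ * B) *ᵥ z = B *ᵥ z ⬝ᵥ B *ᵥ z := by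
  rw [← mulVec_mulVec, dotProduct_mulVec, vecMul_transpose]

open scoped MatrixOrder in
theorem Matrix.PosSemidef.exists_eq_transpose_mul_self {A : Matrix ι ι ℝ} (hA : A.PosSemidef) :
    ∃ B, A = Bᵀ * B := by
  classical
  exact CStarAlgebra.nonneg_iff_eq_star_mul_self.mp hA.nonneg

variable [DecidableEq ι] {A : Matrix ι ι ℝ}

theorem Matrix.PosDef.integrable_exp_neg_dotProduct_mulVec (hA : A.PosDef) :
    Integrable fun z : ι → ℝ ↦ exp (-(z ⬝ᵥ A *ᵥ z)) := by
  obtain ⟨B, rfl⟩ := hA.posSemidef.exists_eq_transpose_mul_self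
  have hB : B.det ≠ 0 := fun h ↦ hA.det_pos.ne' (by simp [h])
  simp_rw [dotProduct_transpose_mul_self_mulVec]
  exact (integrable_comp_mulVec_iff hB).2 integrable_exp_neg_dotProduct_self

theorem Matrix.PosDef.integral_exp_neg_dotProduct_mulVec (hA : A.PosDef) :
    ∫ z : ι → ℝ, exp (-(z ⬝ᵥ A *ᵥ z)) =
      π ^ ((Fintype.card ι : ℝ) / 2) * A.det ^ (-(1 : ℝ) / 2) := by
  obtain ⟨B, rfl⟩ := hA.posSemidef.exists_eq_transpose_mul_self
  have hB : B.det ≠ 0 := fun h ↦ hA.det_pos.ne' (by simp [h])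
  simp_rw [dotProduct_transpose_mul_self_mulVec]
  rw [integral_comp_mulVec hB fun w ↦ exp (-(w ⬝ᵥ w)), integral_exp_neg_dotProduct_self,
    det_mul, det_transpose, ← sq, neg_div, Real.rpow_neg (sq_nonneg _), ← Real.sqrt_eq_rpow,
    Real.sqrt_sq_eq_abs, smul_eq_mul, mul_comm]

end Gaussian

theorem tendsto_pow_finrank_smul_integral_comp_smul {E F : Type*} [NormedAddCommGroup E]
    [NormedSpace ℝ E] [FiniteDimensional ℝ E] [MeasurableSpace E] [BorelSpace E]
    [NormedAddCommGroup F] [NormedSpace ℝ F] [CompleteSpace F] (μ : Measure E)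
    [μ.IsAddHaarMeasure] {g : E → ℝ} (hg : Integrable g μ) {f : E → F} (hf : Continuous f)
    (hbd : ∃ M : ℝ, ∀ z, ‖f z‖ ≤ M) :
    Tendsto (fun t : ℝ ↦ t ^ Module.finrank ℝ E • ∫ z, g (t • z) • f z ∂μ) atTop
      (nhds ((∫ z, g z ∂μ) • f 0)) := by
  obtain ⟨M, hM⟩ := hbd
  have hlim : Tendsto (fun t : ℝ ↦ ∫ y, g y • f (t⁻¹ • y) ∂μ) atTop
      (nhds (∫ y, g y • f 0 ∂μ)) := by
    refine tendsto_integral_filter_of_dominated_convergence (fun y ↦ M * ‖g y‖)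
      (Eventually.of_forall fun t ↦ ?_) (Eventually.of_forall fun t ↦ ?_) (hg.norm.const_mul M)
      (Eventually.of_forall fun y ↦ ?_)
    · exact hg.aestronglyMeasurable.smul
        (hf.comp (continuous_const_smul (t⁻¹ : ℝ))).aestronglyMeasurable
    · refine Eventually.of_forall fun y ↦ ?_
      rw [norm_smul, mul_comm]
      exact mul_le_mul_of_nonneg_right (hM _) (norm_nonneg _)
    · have : Tendsto (fun t : ℝ ↦ t⁻¹ • y) atTop (nhds 0) := by
        simpa using (tendsto_inv_atTop_zero (𝕜 := ℝ)).smul_const y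
      exact ((hf.tendsto 0).comp this).const_smul (g y)
  rw [integral_smul_const] at hlim
  refine hlim.congr' ?_
  filter_upwards [eventually_gt_atTop 0] with t ht
  rw [← Measure.integral_comp_inv_smul_of_nonneg μ _ ht.le]
  simp_rw [smul_inv_smul₀ ht.ne']

/-- stationary-phase / Laplace asymptotics for a positive definite
quadratic exponent: for A real symmetric positive definite and f bounded continuous,
ρ^{3/2} ∫ f(z) e^{−ρ⟨z,Az⟩} dz → f(0)·π^{3/2}·(det A)^{−1/2} as ρ → ∞. -/
theorem stmt_9 (A : Matrix (Fin 3) (Fin 3) ℝ) (hA : A.PosDef)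
    (f : (Fin 3 → ℝ) → ℂ) (hf : Continuous f) (hbd : ∃ M : ℝ, ∀ z, ‖f z‖ ≤ M) :
    Tendsto
      (fun ρ : ℝ => ((ρ ^ ((3 : ℝ) / 2) : ℝ) : ℂ) *
        ∫ z : Fin 3 → ℝ, f z * ((Real.exp (-(ρ * (z ⬝ᵥ A.mulVec z))) : ℝ) : ℂ))
      atTop
      (nhds (f 0 * ((π ^ ((3 : ℝ) / 2) * A.det ^ (-(1 : ℝ) / 2) : ℝ) : ℂ))) := by
  have hlim := (tendsto_pow_finrank_smul_integral_comp_smul volume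
    hA.integrable_exp_neg_dotProduct_mulVec hf hbd).comp tendsto_sqrt_atTop
  rw [hA.integral_exp_neg_dotProduct_mulVec, Complex.real_smul, mul_comm] at hlim
  simp only [Fintype.card_fin, Nat.cast_ofNat] at hlim
  refine hlim.congr' ?_
  filter_upwards [eventually_ge_atTop 0] with ρ hρ
  have hscale : ∀ z : Fin 3 → ℝ, (√ρ • z) ⬝ᵥ A *ᵥ (√ρ • z) = ρ * (z ⬝ᵥ A *ᵥ z) := fun z ↦ by
    rw [mulVec_smul, smul_dotProduct, dotProduct_smul, smul_eq_mul, smul_eq_mul, ← mul_assoc,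
      Real.mul_self_sqrt hρ]
  have hpow : √ρ ^ 3 = ρ ^ ((3 : ℝ) / 2) := by
    rw [Real.sqrt_eq_rpow, ← Real.rpow_natCast, ← Real.rpow_mul hρ]
    norm_num
  simp only [Function.comp_apply, Module.finrank_fin_fun, hscale, hpow, Complex.real_smul,
    mul_comm (f _)]
end

section
/- Let Ω ⊂ ℝ³ be an open rectangular box, T > 0, and let c : ℝ³ → ℝ be continuous and positive. Let β : ℝ³ → ℝ be continuous, and let w, U, u₀ : ℝ × ℝ³ → ℝ be twice continuously differentiable on a neighborhood of [0,T] × closure(Ω) and satisfy: (i) c(x)⁻²∂t²U − ΔU = 2β·∂t²w on (0,T) × Ω; (ii) U = 0 on (0,T) × ∂Ω; (iii) U = ∂tU = 0 and w = ∂tw = 0 at t = 0 on closure(Ω); (iv) c(x)⁻²∂t²u₀ − Δu₀ = 0 on (0,T) × Ω; (v) u₀ = ∂tu₀ = 0 at t = T on closure(Ω). Then ∫₀ᵀ ∫_{∂Ω} (∂_ν U)·u₀ dS dt = 2 ∫₀ᵀ ∫_Ω β·∂t(w)·∂t(u₀) dx dt. -/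
open Set intervalIntegral

/-- Partial derivative of f(t,x,y,z) in t. -/
noncomputable def dt4 (f : ℝ → ℝ → ℝ → ℝ → ℝ) (t x y z : ℝ) : ℝ :=
  deriv (fun s => f s x y z) t

/-- Second partial derivative in t. -/
noncomputable def dt4sq (f : ℝ → ℝ → ℝ → ℝ → ℝ) (t x y z : ℝ) : ℝ :=
  deriv (fun s => dt4 f s x y z) t

/-- Partial derivative in the first spatial variable. -/
noncomputable def dx4 (f : ℝ → ℝ → ℝ → ℝ → ℝ) (t x y z : ℝ) : ℝ :=
  deriv (fun s => f t s y z) x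

/-- Partial derivative in the second spatial variable. -/
noncomputable def dy4 (f : ℝ → ℝ → ℝ → ℝ → ℝ) (t x y z : ℝ) : ℝ :=
  deriv (fun s => f t x s z) y

/-- Partial derivative in the third spatial variable. -/
noncomputable def dz4 (f : ℝ → ℝ → ℝ → ℝ → ℝ) (t x y z : ℝ) : ℝ :=
  deriv (fun s => f t x y s) z

/-- Spatial Laplacian. -/
noncomputable def lap4 (f : ℝ → ℝ → ℝ → ℝ → ℝ) (t x y z : ℝ) : ℝ :=
  deriv (fun s => dx4 f t s y z) x + deriv (fun s => dy4 f t x s z) y +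
    deriv (fun s => dz4 f t x y s) z

/-!
For fixed `t ∈ (0,T)`, integrating by parts once in each space variable (Green's second identity
on the box) and using `U = 0` on `∂Ω` turns the boundary term into `∫_Ω (ΔU·u₀ − U·Δu₀)`.
After moving the time integral inside, at each interior point the equations (i) and (iv) turn
the integrand into `c⁻²(∂t²U·u₀ − U·∂t²u₀) − 2β ∂t²w·u₀`. The first part is the time derivative
of `c⁻²(∂tU·u₀ − U·∂tu₀)`, which vanishes at `t = 0` by (iii) and at `t = T` by (v); integrating
the second by parts in `t` (using `∂tw = 0` at `0` and `u₀ = 0` at `T`) leaves `2β ∂tw·∂tu₀`.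
-/

open MeasureTheory Function

theorem integral_deriv2_mul_sub_mul_deriv2_eq_sub {u u' u'' v v' v'' : ℝ → ℝ} {a b : ℝ}
    (hu : ∀ x ∈ uIcc a b, HasDerivAt u (u' x) x) (hu' : ∀ x ∈ uIcc a b, HasDerivAt u' (u'' x) x)
    (hv : ∀ x ∈ uIcc a b, HasDerivAt v (v' x) x) (hv' : ∀ x ∈ uIcc a b, HasDerivAt v' (v'' x) x)
    (hint : IntervalIntegrable (fun x => u'' x * v x - u x * v'' x) volume a b) :
    ∫ x in a..b, (u'' x * v x - u x * v'' x)
      = (u' b * v b - u b * v' b) - (u' a * v a - u a * v' a) :=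
  integral_eq_sub_of_hasDerivAt (fun x hx =>
    (((hu' x hx).mul (hv x hx)).sub ((hu x hx).mul (hv' x hx))).congr_deriv (by ring)) hint

theorem integral_mul_sub_mul_eq_of_wave_eq {u u' u'' v v' v'' w' w'' Lu Lv : ℝ → ℝ} {a b k β : ℝ}
    (hu : ∀ t ∈ uIcc a b, HasDerivAt u (u' t) t) (hu' : ∀ t ∈ uIcc a b, HasDerivAt u' (u'' t) t)
    (hv : ∀ t ∈ uIcc a b, HasDerivAt v (v' t) t) (hv' : ∀ t ∈ uIcc a b, HasDerivAt v' (v'' t) t)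
    (hw' : ∀ t ∈ uIcc a b, HasDerivAt w' (w'' t) t) (hu'' : ContinuousOn u'' (uIcc a b))
    (hv'' : ContinuousOn v'' (uIcc a b)) (hw'' : ContinuousOn w'' (uIcc a b))
    (hLu : ∀ t ∈ uIoo a b, k * u'' t - Lu t = 2 * β * w'' t)
    (hLv : ∀ t ∈ uIoo a b, k * v'' t - Lv t = 0)
    (hua : u a = 0) (hu'a : u' a = 0) (hw'a : w' a = 0) (hvb : v b = 0) (hv'b : v' b = 0) :
    ∫ t in a..b, (Lu t * v t - u t * Lv t) = 2 * ∫ t in a..b, β * w' t * v' t := by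
  have hu_cont := HasDerivAt.continuousOn hu
  have hv_cont := HasDerivAt.continuousOn hv
  have hv'_cont := HasDerivAt.continuousOn hv'
  have hint : ContinuousOn (fun t => u'' t * v t - u t * v'' t) (uIcc a b) :=
    (hu''.mul hv_cont).sub (hu_cont.mul hv'')
  have hgreen : ∫ t in a..b, (u'' t * v t - u t * v'' t) = 0 := by
    rw [integral_deriv2_mul_sub_mul_deriv2_eq_sub hu hu' hv hv' hint.intervalIntegrable,
      hua, hu'a, hvb, hv'b]
    ring
  have hvw'' : ContinuousOn (fun t => v t * w'' t) (uIcc a b) := hv_cont.mul hw''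
  have hparts : ∫ t in a..b, v t * w'' t = -∫ t in a..b, v' t * w' t := by
    rw [integral_mul_deriv_eq_deriv_mul hv hw' (hv'_cont.intervalIntegrable)
      hw''.intervalIntegrable, hvb, hw'a]
    ring
  calc ∫ t in a..b, (Lu t * v t - u t * Lv t)
      = ∫ t in a..b, (k * (u'' t * v t - u t * v'' t) - 2 * β * (v t * w'' t)) :=
        integral_congr_uIoo fun t ht => by
          linear_combination (-v t) * hLu t ht + u t * hLv t ht
    _ = k * (∫ t in a..b, (u'' t * v t - u t * v'' t)) - 2 * β * ∫ t in a..b, v t * w'' t := by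
        rw [intervalIntegral.integral_sub ((hint.intervalIntegrable).const_mul k)
          (hvw''.intervalIntegrable.const_mul _),
          intervalIntegral.integral_const_mul, intervalIntegral.integral_const_mul]
    _ = 2 * ∫ t in a..b, β * w' t * v' t := by
        have hβ : ∫ t in a..b, β * w' t * v' t = β * ∫ t in a..b, v' t * w' t := by
          rw [← intervalIntegral.integral_const_mul]
          exact integral_congr fun t _ => by ring
        rw [hgreen, hparts, hβ]
        ring

section Line

variable {E G : Type*} [NormedAddCommGroup E] [NormedSpace ℝ E] [NormedAddCommGroup G]
  [NormedSpace ℝ G] {F : E → G} {O : Set E} {L : ℝ → E} {v : E} {r : ℝ}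

theorem contDiffOn_fderiv_apply {m n : WithTop ℕ∞} (hO : IsOpen O) (hF : ContDiffOn ℝ n F O)
    (hmn : m + 1 ≤ n) (v : E) : ContDiffOn ℝ m (fun q => fderiv ℝ F q v) O :=
  (hF.fderiv_of_isOpen hO hmn).clm_apply contDiffOn_const

theorem hasDerivAt_comp_line (hO : IsOpen O) (hF : DifferentiableOn ℝ F O) (hL : HasDerivAt L v r)
    (hr : L r ∈ O) : HasDerivAt (fun s => F (L s)) (deriv (fun s => F (L s)) r) r :=
  ((hF.differentiableAt (hO.mem_nhds hr)).comp r hL.differentiableAt).hasDerivAt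

theorem deriv_comp_line (hF : DifferentiableAt ℝ F (L r)) (hL : HasDerivAt L v r) :
    deriv (fun s => F (L s)) r = fderiv ℝ F (L r) v :=
  (hF.hasFDerivAt.comp_hasDerivAt r hL).deriv

theorem hasDerivAt_deriv_comp_line (hO : IsOpen O) (hF : ContDiffOn ℝ 2 F O)
    (hL : ∀ s, HasDerivAt L v s) (hr : L r ∈ O) :
    HasDerivAt (deriv fun s => F (L s)) (fderiv ℝ (fun q => fderiv ℝ F q v) (L r) v) r := by
  have hF' := (contDiffOn_fderiv_apply hO hF le_rfl v).differentiableOn one_ne_zero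
  refine ((hF'.differentiableAt (hO.mem_nhds hr)).hasFDerivAt.comp_hasDerivAt r (hL r))
    |>.congr_of_eventuallyEq ?_
  filter_upwards [(hL r).continuousAt.preimage_mem_nhds (hO.mem_nhds hr)] with s hs
  exact deriv_comp_line ((hF.differentiableOn two_ne_zero).differentiableAt (hO.mem_nhds hs)) (hL s)

-- `Λ q` is a line of direction `v` through `q = Λ q (π q)`: the derivatives below are the
-- partial derivatives along `v`, as functions of the point.
variable {Λ : E → ℝ → E} {π : E → ℝ}

theorem continuousOn_deriv_comp_line (hO : IsOpen O) (hF : ContDiffOn ℝ 1 F O)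
    (hΛ : ∀ q, Λ q (π q) = q) (hL : ∀ q s, HasDerivAt (Λ q) v s) :
    ContinuousOn (fun q => deriv (fun s => F (Λ q s)) (π q)) O := by
  refine (contDiffOn_fderiv_apply (m := 0) hO hF (by norm_num) v).continuousOn.congr fun q hq => ?_
  have hFq := (hF.differentiableOn one_ne_zero).differentiableAt (hO.mem_nhds hq)
  rw [deriv_comp_line ((hΛ q).symm ▸ hFq) (hL q (π q)), hΛ]

theorem continuousOn_deriv_deriv_comp_line (hO : IsOpen O) (hF : ContDiffOn ℝ 2 F O)
    (hΛ : ∀ q, Λ q (π q) = q) (hL : ∀ q s, HasDerivAt (Λ q) v s) :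
    ContinuousOn (fun q => deriv (deriv fun s => F (Λ q s)) (π q)) O := by
  refine (contDiffOn_fderiv_apply (m := 0) hO (contDiffOn_fderiv_apply (m := 1) hO hF le_rfl v)
    (by norm_num) v |>.continuousOn).congr fun q hq => ?_
  rw [(hasDerivAt_deriv_comp_line hO hF (hL q) ((hΛ q).symm ▸ hq)).deriv, hΛ]

end Line

noncomputable def dxx4 (f : ℝ → ℝ → ℝ → ℝ → ℝ) (t x y z : ℝ) : ℝ :=
  deriv (fun s => dx4 f t s y z) x

noncomputable def dyy4 (f : ℝ → ℝ → ℝ → ℝ → ℝ) (t x y z : ℝ) : ℝ :=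
  deriv (fun s => dy4 f t x s z) y

noncomputable def dzz4 (f : ℝ → ℝ → ℝ → ℝ → ℝ) (t x y z : ℝ) : ℝ :=
  deriv (fun s => dz4 f t x y s) z

theorem lap4_eq (f : ℝ → ℝ → ℝ → ℝ → ℝ) (t x y z : ℝ) :
    lap4 f t x y z = dxx4 f t x y z + dyy4 f t x y z + dzz4 f t x y z := rfl

section Partials

variable {f : ℝ → ℝ → ℝ → ℝ → ℝ} {O : Set (ℝ × ℝ × ℝ × ℝ)} {t x y z : ℝ}

theorem hasDerivAt_lineT (q : ℝ × ℝ × ℝ × ℝ) (s : ℝ) :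
    HasDerivAt (fun r => (r, q.2)) ((1, 0, 0, 0) : ℝ × ℝ × ℝ × ℝ) s :=
  (hasDerivAt_id' s).prodMk (hasDerivAt_const s q.2)

theorem hasDerivAt_lineX (q : ℝ × ℝ × ℝ × ℝ) (s : ℝ) :
    HasDerivAt (fun r => (q.1, r, q.2.2)) ((0, 1, 0, 0) : ℝ × ℝ × ℝ × ℝ) s :=
  (hasDerivAt_const s q.1).prodMk ((hasDerivAt_id' s).prodMk (hasDerivAt_const s q.2.2))

theorem hasDerivAt_lineY (q : ℝ × ℝ × ℝ × ℝ) (s : ℝ) :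
    HasDerivAt (fun r => (q.1, q.2.1, r, q.2.2.2)) ((0, 0, 1, 0) : ℝ × ℝ × ℝ × ℝ) s :=
  (hasDerivAt_const s q.1).prodMk ((hasDerivAt_const s q.2.1).prodMk
    ((hasDerivAt_id' s).prodMk (hasDerivAt_const s q.2.2.2)))

theorem hasDerivAt_lineZ (q : ℝ × ℝ × ℝ × ℝ) (s : ℝ) :
    HasDerivAt (fun r => (q.1, q.2.1, q.2.2.1, r)) ((0, 0, 0, 1) : ℝ × ℝ × ℝ × ℝ) s :=
  (hasDerivAt_const s q.1).prodMk ((hasDerivAt_const s q.2.1).prodMk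
    ((hasDerivAt_const s q.2.2.1).prodMk (hasDerivAt_id' s)))

theorem hasDerivAt_dt4 (hO : IsOpen O) (hf : ContDiffOn ℝ 2 ↿f O) (hq : (t, x, y, z) ∈ O) :
    HasDerivAt (fun s => f s x y z) (dt4 f t x y z) t :=
  hasDerivAt_comp_line (F := ↿f) (L := fun s => (s, x, y, z)) hO (hf.differentiableOn two_ne_zero)
    (hasDerivAt_lineT (t, x, y, z) t) hq

theorem hasDerivAt_dx4 (hO : IsOpen O) (hf : ContDiffOn ℝ 2 ↿f O) (hq : (t, x, y, z) ∈ O) :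
    HasDerivAt (fun s => f t s y z) (dx4 f t x y z) x :=
  hasDerivAt_comp_line (F := ↿f) (L := fun s => (t, s, y, z)) hO (hf.differentiableOn two_ne_zero)
    (hasDerivAt_lineX (t, x, y, z) x) hq

theorem hasDerivAt_dy4 (hO : IsOpen O) (hf : ContDiffOn ℝ 2 ↿f O) (hq : (t, x, y, z) ∈ O) :
    HasDerivAt (fun s => f t x s z) (dy4 f t x y z) y :=
  hasDerivAt_comp_line (F := ↿f) (L := fun s => (t, x, s, z)) hO (hf.differentiableOn two_ne_zero)
    (hasDerivAt_lineY (t, x, y, z) y) hq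

theorem hasDerivAt_dz4 (hO : IsOpen O) (hf : ContDiffOn ℝ 2 ↿f O) (hq : (t, x, y, z) ∈ O) :
    HasDerivAt (fun s => f t x y s) (dz4 f t x y z) z :=
  hasDerivAt_comp_line (F := ↿f) (L := fun s => (t, x, y, s)) hO (hf.differentiableOn two_ne_zero)
    (hasDerivAt_lineZ (t, x, y, z) z) hq

theorem hasDerivAt_dt4sq (hO : IsOpen O) (hf : ContDiffOn ℝ 2 ↿f O) (hq : (t, x, y, z) ∈ O) :
    HasDerivAt (fun s => dt4 f s x y z) (dt4sq f t x y z) t :=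
  (hasDerivAt_deriv_comp_line (F := ↿f) (L := fun s => (s, x, y, z)) hO hf
    (hasDerivAt_lineT (t, x, y, z)) hq).differentiableAt.hasDerivAt

theorem hasDerivAt_dxx4 (hO : IsOpen O) (hf : ContDiffOn ℝ 2 ↿f O) (hq : (t, x, y, z) ∈ O) :
    HasDerivAt (fun s => dx4 f t s y z) (dxx4 f t x y z) x :=
  (hasDerivAt_deriv_comp_line (F := ↿f) (L := fun s => (t, s, y, z)) hO hf
    (hasDerivAt_lineX (t, x, y, z)) hq).differentiableAt.hasDerivAt

theorem hasDerivAt_dyy4 (hO : IsOpen O) (hf : ContDiffOn ℝ 2 ↿f O) (hq : (t, x, y, z) ∈ O) :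
    HasDerivAt (fun s => dy4 f t x s z) (dyy4 f t x y z) y :=
  (hasDerivAt_deriv_comp_line (F := ↿f) (L := fun s => (t, x, s, z)) hO hf
    (hasDerivAt_lineY (t, x, y, z)) hq).differentiableAt.hasDerivAt

theorem hasDerivAt_dzz4 (hO : IsOpen O) (hf : ContDiffOn ℝ 2 ↿f O) (hq : (t, x, y, z) ∈ O) :
    HasDerivAt (fun s => dz4 f t x y s) (dzz4 f t x y z) z :=
  (hasDerivAt_deriv_comp_line (F := ↿f) (L := fun s => (t, x, y, s)) hO hf
    (hasDerivAt_lineZ (t, x, y, z)) hq).differentiableAt.hasDerivAt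

theorem continuousOn_dt4 (hO : IsOpen O) (hf : ContDiffOn ℝ 2 ↿f O) : ContinuousOn ↿(dt4 f) O :=
  continuousOn_deriv_comp_line (Λ := fun q s => (s, q.2))
    (π := fun q => q.1) hO (hf.of_le one_le_two) (fun _ => rfl)
    hasDerivAt_lineT

theorem continuousOn_dx4 (hO : IsOpen O) (hf : ContDiffOn ℝ 2 ↿f O) : ContinuousOn ↿(dx4 f) O :=
  continuousOn_deriv_comp_line (Λ := fun q s => (q.1, s, q.2.2))
    (π := fun q => q.2.1) hO (hf.of_le one_le_two) (fun _ => rfl)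
    hasDerivAt_lineX

theorem continuousOn_dy4 (hO : IsOpen O) (hf : ContDiffOn ℝ 2 ↿f O) : ContinuousOn ↿(dy4 f) O :=
  continuousOn_deriv_comp_line (Λ := fun q s => (q.1, q.2.1, s, q.2.2.2))
    (π := fun q => q.2.2.1) hO (hf.of_le one_le_two) (fun _ => rfl)
    hasDerivAt_lineY

theorem continuousOn_dz4 (hO : IsOpen O) (hf : ContDiffOn ℝ 2 ↿f O) : ContinuousOn ↿(dz4 f) O :=
  continuousOn_deriv_comp_line (Λ := fun q s => (q.1, q.2.1, q.2.2.1, s))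
    (π := fun q => q.2.2.2) hO (hf.of_le one_le_two) (fun _ => rfl)
    hasDerivAt_lineZ

theorem continuousOn_dt4sq (hO : IsOpen O) (hf : ContDiffOn ℝ 2 ↿f O) :
    ContinuousOn ↿(dt4sq f) O :=
  continuousOn_deriv_deriv_comp_line (Λ := fun q s => (s, q.2))
    (π := fun q => q.1) hO hf (fun _ => rfl) hasDerivAt_lineT

theorem continuousOn_dxx4 (hO : IsOpen O) (hf : ContDiffOn ℝ 2 ↿f O) :
    ContinuousOn ↿(dxx4 f) O :=
  continuousOn_deriv_deriv_comp_line (Λ := fun q s => (q.1, s, q.2.2))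
    (π := fun q => q.2.1) hO hf (fun _ => rfl) hasDerivAt_lineX

theorem continuousOn_dyy4 (hO : IsOpen O) (hf : ContDiffOn ℝ 2 ↿f O) :
    ContinuousOn ↿(dyy4 f) O :=
  continuousOn_deriv_deriv_comp_line (Λ := fun q s => (q.1, q.2.1, s, q.2.2.2))
    (π := fun q => q.2.2.1) hO hf (fun _ => rfl) hasDerivAt_lineY

theorem continuousOn_dzz4 (hO : IsOpen O) (hf : ContDiffOn ℝ 2 ↿f O) :
    ContinuousOn ↿(dzz4 f) O :=
  continuousOn_deriv_deriv_comp_line (Λ := fun q s => (q.1, q.2.1, q.2.2.1, s))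
    (π := fun q => q.2.2.2) hO hf (fun _ => rfl) hasDerivAt_lineZ

theorem continuousOn_lap4 (hO : IsOpen O) (hf : ContDiffOn ℝ 2 ↿f O) :
    ContinuousOn ↿(lap4 f) O :=
  ((continuousOn_dxx4 hO hf).add (continuousOn_dyy4 hO hf)).add (continuousOn_dzz4 hO hf)

end Partials

-- An iterated integral over a box only sees the box, so for functions continuous on the box the
-- exchange of integrals reduces, through a Tietze extension, to globally continuous functions,
-- whose parametric integrals are continuous.
section Fubini

variable {a b c d a₁ b₁ a₂ b₂ a₃ b₃ a₄ b₄ : ℝ}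

theorem ContinuousOn.exists_continuous_eqOn {X : Type*} [TopologicalSpace X] [NormalSpace X]
    {s : Set X} {f : X → ℝ} (hf : ContinuousOn f s) (hs : IsClosed s) :
    ∃ g : X → ℝ, Continuous g ∧ EqOn g f s := by
  obtain ⟨g, hg⟩ := ContinuousMap.exists_restrict_eq hs ⟨s.domRestrict f, hf.domRestrict⟩
  exact ⟨g, g.continuous, fun x hx => congr($hg ⟨x, hx⟩)⟩

theorem intervalIntegral_swap_of_continuousOn {f : ℝ → ℝ → ℝ} (hab : a ≤ b) (hcd : c ≤ d)
    (hf : ContinuousOn ↿f (Icc a b ×ˢ Icc c d)) :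
    ∫ x in a..b, ∫ y in c..d, f x y = ∫ y in c..d, ∫ x in a..b, f x y := by
  simp only [integral_of_le hab, integral_of_le hcd]
  refine integral_integral_swap ?_
  rw [Measure.prod_restrict]
  exact (hf.integrableOn_compact (isCompact_Icc.prod isCompact_Icc)).mono_set
    (prod_mono Ioc_subset_Icc_self Ioc_subset_Icc_self)

theorem exists_continuous_eq_on_uIcc₂ {f : ℝ → ℝ → ℝ} (hab : a ≤ b) (hcd : c ≤ d)
    (hf : ContinuousOn ↿f (Icc a b ×ˢ Icc c d)) :
    ∃ F : ℝ × ℝ → ℝ, Continuous F ∧ ∀ x ∈ uIcc a b, ∀ y ∈ uIcc c d, F (x, y) = f x y := by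
  obtain ⟨F, hF, hFf⟩ := hf.exists_continuous_eqOn (isClosed_Icc.prod isClosed_Icc)
  rw [uIcc_of_le hab, uIcc_of_le hcd]
  exact ⟨F, hF, fun x hx y hy => hFf ⟨hx, hy⟩⟩

theorem exists_continuous_eq_on_uIcc₃ {f : ℝ → ℝ → ℝ → ℝ} (h₁ : a₁ ≤ b₁) (h₂ : a₂ ≤ b₂)
    (h₃ : a₃ ≤ b₃) (hf : ContinuousOn ↿f (Icc a₁ b₁ ×ˢ Icc a₂ b₂ ×ˢ Icc a₃ b₃)) :
    ∃ F : ℝ × ℝ × ℝ → ℝ, Continuous F ∧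
      ∀ x ∈ uIcc a₁ b₁, ∀ y ∈ uIcc a₂ b₂, ∀ z ∈ uIcc a₃ b₃, F (x, y, z) = f x y z := by
  obtain ⟨F, hF, hFf⟩ :=
    hf.exists_continuous_eqOn (isClosed_Icc.prod (isClosed_Icc.prod isClosed_Icc))
  rw [uIcc_of_le h₁, uIcc_of_le h₂, uIcc_of_le h₃]
  exact ⟨F, hF, fun x hx y hy z hz => hFf ⟨hx, hy, hz⟩⟩

theorem exists_continuous_eq_on_uIcc₄ {f : ℝ → ℝ → ℝ → ℝ → ℝ} (h₁ : a₁ ≤ b₁) (h₂ : a₂ ≤ b₂)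
    (h₃ : a₃ ≤ b₃) (h₄ : a₄ ≤ b₄)
    (hf : ContinuousOn ↿f (Icc a₁ b₁ ×ˢ Icc a₂ b₂ ×ˢ Icc a₃ b₃ ×ˢ Icc a₄ b₄)) :
    ∃ F : ℝ × ℝ × ℝ × ℝ → ℝ, Continuous F ∧ ∀ t ∈ uIcc a₁ b₁, ∀ x ∈ uIcc a₂ b₂,
      ∀ y ∈ uIcc a₃ b₃, ∀ z ∈ uIcc a₄ b₄, F (t, x, y, z) = f t x y z := by
  obtain ⟨F, hF, hFf⟩ := hf.exists_continuous_eqOn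
    (isClosed_Icc.prod (isClosed_Icc.prod (isClosed_Icc.prod isClosed_Icc)))
  rw [uIcc_of_le h₁, uIcc_of_le h₂, uIcc_of_le h₃, uIcc_of_le h₄]
  exact ⟨F, hF, fun t ht x hx y hy z hz => hFf ⟨ht, hx, hy, hz⟩⟩

theorem integral_integral_sub_of_continuousOn {f g : ℝ → ℝ → ℝ} (hab : a ≤ b) (hcd : c ≤ d)
    (hf : ContinuousOn ↿f (Icc a b ×ˢ Icc c d)) (hg : ContinuousOn ↿g (Icc a b ×ˢ Icc c d)) :
    (∫ x in a..b, ∫ y in c..d, f x y) - ∫ x in a..b, ∫ y in c..d, g x y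
      = ∫ x in a..b, ∫ y in c..d, (f x y - g x y) := by
  obtain ⟨F, hF, hFf⟩ := exists_continuous_eq_on_uIcc₂ hab hcd hf
  obtain ⟨G, hG, hGg⟩ := exists_continuous_eq_on_uIcc₂ hab hcd hg
  calc (∫ x in a..b, ∫ y in c..d, f x y) - ∫ x in a..b, ∫ y in c..d, g x y
      = (∫ x in a..b, ∫ y in c..d, F (x, y)) - ∫ x in a..b, ∫ y in c..d, G (x, y) := by
        congr 1 <;> exact integral_congr fun x hx => integral_congr fun y hy => by
          simp only [hFf x hx y hy, hGg x hx y hy]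
    _ = ∫ x in a..b, ∫ y in c..d, (F (x, y) - G (x, y)) := by
        rw [← intervalIntegral.integral_sub (Continuous.intervalIntegrable (by fun_prop) _ _)
          (Continuous.intervalIntegrable (by fun_prop) _ _)]
        exact integral_congr fun x _ => (intervalIntegral.integral_sub
          (Continuous.intervalIntegrable (by fun_prop) _ _)
          (Continuous.intervalIntegrable (by fun_prop) _ _)).symm
    _ = ∫ x in a..b, ∫ y in c..d, (f x y - g x y) :=
        integral_congr fun x hx => integral_congr fun y hy => by
          simp only [hFf x hx y hy, hGg x hx y hy]

theorem integral_yzx_eq_integral_xyz {f : ℝ → ℝ → ℝ → ℝ} (h₁ : a₁ ≤ b₁) (h₂ : a₂ ≤ b₂)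
    (h₃ : a₃ ≤ b₃) (hf : ContinuousOn ↿f (Icc a₁ b₁ ×ˢ Icc a₂ b₂ ×ˢ Icc a₃ b₃)) :
    ∫ y in a₂..b₂, ∫ z in a₃..b₃, ∫ x in a₁..b₁, f x y z
      = ∫ x in a₁..b₁, ∫ y in a₂..b₂, ∫ z in a₃..b₃, f x y z := by
  obtain ⟨F, hF, hFf⟩ := exists_continuous_eq_on_uIcc₃ h₁ h₂ h₃ hf
  calc ∫ y in a₂..b₂, ∫ z in a₃..b₃, ∫ x in a₁..b₁, f x y z
      = ∫ y in a₂..b₂, ∫ z in a₃..b₃, ∫ x in a₁..b₁, F (x, y, z) :=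
        integral_congr fun y hy => integral_congr fun z hz => integral_congr fun x hx =>
          (hFf x hx y hy z hz).symm
    _ = ∫ y in a₂..b₂, ∫ x in a₁..b₁, ∫ z in a₃..b₃, F (x, y, z) := integral_congr fun y _ =>
        intervalIntegral_swap_of_continuousOn h₃ h₁ (by fun_prop : Continuous _).continuousOn
    _ = ∫ x in a₁..b₁, ∫ y in a₂..b₂, ∫ z in a₃..b₃, F (x, y, z) :=
        intervalIntegral_swap_of_continuousOn h₂ h₁ (by fun_prop : Continuous _).continuousOn
    _ = ∫ x in a₁..b₁, ∫ y in a₂..b₂, ∫ z in a₃..b₃, f x y z :=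
        integral_congr fun x hx => integral_congr fun y hy => integral_congr fun z hz =>
          hFf x hx y hy z hz

theorem integral_xzy_eq_integral_xyz {f : ℝ → ℝ → ℝ → ℝ} (h₁ : a₁ ≤ b₁) (h₂ : a₂ ≤ b₂)
    (h₃ : a₃ ≤ b₃) (hf : ContinuousOn ↿f (Icc a₁ b₁ ×ˢ Icc a₂ b₂ ×ˢ Icc a₃ b₃)) :
    ∫ x in a₁..b₁, ∫ z in a₃..b₃, ∫ y in a₂..b₂, f x y z
      = ∫ x in a₁..b₁, ∫ y in a₂..b₂, ∫ z in a₃..b₃, f x y z :=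
  integral_congr fun x hx => intervalIntegral_swap_of_continuousOn h₃ h₂ <|
    hf.comp (by fun_prop : Continuous fun p : ℝ × ℝ => (x, p.2, p.1)).continuousOn
      fun _ hp => ⟨uIcc_of_le h₁ ▸ hx, hp.2, hp.1⟩

theorem integral_xyz_add {f g : ℝ → ℝ → ℝ → ℝ} (h₁ : a₁ ≤ b₁) (h₂ : a₂ ≤ b₂)
    (h₃ : a₃ ≤ b₃) (hf : ContinuousOn ↿f (Icc a₁ b₁ ×ˢ Icc a₂ b₂ ×ˢ Icc a₃ b₃))
    (hg : ContinuousOn ↿g (Icc a₁ b₁ ×ˢ Icc a₂ b₂ ×ˢ Icc a₃ b₃)) :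
    ∫ x in a₁..b₁, ∫ y in a₂..b₂, ∫ z in a₃..b₃, (f x y z + g x y z)
      = (∫ x in a₁..b₁, ∫ y in a₂..b₂, ∫ z in a₃..b₃, f x y z)
        + ∫ x in a₁..b₁, ∫ y in a₂..b₂, ∫ z in a₃..b₃, g x y z := by
  obtain ⟨F, hF, hFf⟩ := exists_continuous_eq_on_uIcc₃ h₁ h₂ h₃ hf
  obtain ⟨G, hG, hGg⟩ := exists_continuous_eq_on_uIcc₃ h₁ h₂ h₃ hg
  calc ∫ x in a₁..b₁, ∫ y in a₂..b₂, ∫ z in a₃..b₃, (f x y z + g x y z)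
      = ∫ x in a₁..b₁, ∫ y in a₂..b₂, ∫ z in a₃..b₃, (F (x, y, z) + G (x, y, z)) :=
        integral_congr fun x hx => integral_congr fun y hy => integral_congr fun z hz => by
          simp only [hFf x hx y hy z hz, hGg x hx y hy z hz]
    _ = (∫ x in a₁..b₁, ∫ y in a₂..b₂, ∫ z in a₃..b₃, F (x, y, z))
        + ∫ x in a₁..b₁, ∫ y in a₂..b₂, ∫ z in a₃..b₃, G (x, y, z) := by
        rw [← intervalIntegral.integral_add (Continuous.intervalIntegrable (by fun_prop) _ _)
          (Continuous.intervalIntegrable (by fun_prop) _ _)]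
        refine integral_congr fun x _ => ?_
        rw [← intervalIntegral.integral_add (Continuous.intervalIntegrable (by fun_prop) _ _)
          (Continuous.intervalIntegrable (by fun_prop) _ _)]
        exact integral_congr fun y _ => intervalIntegral.integral_add
          (Continuous.intervalIntegrable (by fun_prop) _ _)
          (Continuous.intervalIntegrable (by fun_prop) _ _)
    _ = _ := by
        congr 1 <;> exact integral_congr fun x hx => integral_congr fun y hy =>
          integral_congr fun z hz => by simp only [hFf x hx y hy z hz, hGg x hx y hy z hz]

theorem integral_txyz_eq_integral_xyzt {f : ℝ → ℝ → ℝ → ℝ → ℝ} (h₀ : a ≤ b) (h₁ : a₁ ≤ b₁)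
    (h₂ : a₂ ≤ b₂) (h₃ : a₃ ≤ b₃)
    (hf : ContinuousOn ↿f (Icc a b ×ˢ Icc a₁ b₁ ×ˢ Icc a₂ b₂ ×ˢ Icc a₃ b₃)) :
    ∫ t in a..b, ∫ x in a₁..b₁, ∫ y in a₂..b₂, ∫ z in a₃..b₃, f t x y z
      = ∫ x in a₁..b₁, ∫ y in a₂..b₂, ∫ z in a₃..b₃, ∫ t in a..b, f t x y z := by
  obtain ⟨F, hF, hFf⟩ := exists_continuous_eq_on_uIcc₄ h₀ h₁ h₂ h₃ hf
  calc ∫ t in a..b, ∫ x in a₁..b₁, ∫ y in a₂..b₂, ∫ z in a₃..b₃, f t x y z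
      = ∫ t in a..b, ∫ x in a₁..b₁, ∫ y in a₂..b₂, ∫ z in a₃..b₃, F (t, x, y, z) :=
        integral_congr fun t ht => integral_congr fun x hx => integral_congr fun y hy =>
          integral_congr fun z hz => (hFf t ht x hx y hy z hz).symm
    _ = ∫ x in a₁..b₁, ∫ t in a..b, ∫ y in a₂..b₂, ∫ z in a₃..b₃, F (t, x, y, z) :=
        intervalIntegral_swap_of_continuousOn h₀ h₁ (by fun_prop : Continuous _).continuousOn
    _ = ∫ x in a₁..b₁, ∫ y in a₂..b₂, ∫ t in a..b, ∫ z in a₃..b₃, F (t, x, y, z) :=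
        integral_congr fun x _ =>
          intervalIntegral_swap_of_continuousOn h₀ h₂ (by fun_prop : Continuous _).continuousOn
    _ = ∫ x in a₁..b₁, ∫ y in a₂..b₂, ∫ z in a₃..b₃, ∫ t in a..b, F (t, x, y, z) :=
        integral_congr fun x _ => integral_congr fun y _ =>
          intervalIntegral_swap_of_continuousOn h₀ h₃ (by fun_prop : Continuous _).continuousOn
    _ = ∫ x in a₁..b₁, ∫ y in a₂..b₂, ∫ z in a₃..b₃, ∫ t in a..b, f t x y z :=
        integral_congr fun x hx => integral_congr fun y hy => integral_congr fun z hz =>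
          integral_congr fun t ht => hFf t ht x hx y hy z hz

end Fubini

section Green

variable {a₁ b₁ a₂ b₂ a₃ b₃ : ℝ}

theorem integral_face_sub_integral_face {φ φ' φ'' ψ ψ' ψ'' : ℝ → ℝ → ℝ → ℝ} (h₁ : a₁ ≤ b₁)
    (h₂ : a₂ ≤ b₂) (h₃ : a₃ ≤ b₃)
    (hφ : ∀ s ∈ Icc a₁ b₁, ∀ p ∈ Icc a₂ b₂, ∀ q ∈ Icc a₃ b₃, HasDerivAt (φ · p q) (φ' s p q) s)
    (hφ' : ∀ s ∈ Icc a₁ b₁, ∀ p ∈ Icc a₂ b₂, ∀ q ∈ Icc a₃ b₃, HasDerivAt (φ' · p q) (φ'' s p q) s)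
    (hψ : ∀ s ∈ Icc a₁ b₁, ∀ p ∈ Icc a₂ b₂, ∀ q ∈ Icc a₃ b₃, HasDerivAt (ψ · p q) (ψ' s p q) s)
    (hψ' : ∀ s ∈ Icc a₁ b₁, ∀ p ∈ Icc a₂ b₂, ∀ q ∈ Icc a₃ b₃, HasDerivAt (ψ' · p q) (ψ'' s p q) s)
    (hφa : ∀ p ∈ Icc a₂ b₂, ∀ q ∈ Icc a₃ b₃, φ a₁ p q = 0)
    (hφb : ∀ p ∈ Icc a₂ b₂, ∀ q ∈ Icc a₃ b₃, φ b₁ p q = 0)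
    (hflux : ContinuousOn ↿(fun s p q => φ' s p q * ψ s p q) (Icc a₁ b₁ ×ˢ Icc a₂ b₂ ×ˢ Icc a₃ b₃))
    (hint : ContinuousOn ↿(fun s p q => φ'' s p q * ψ s p q - φ s p q * ψ'' s p q)
      (Icc a₁ b₁ ×ˢ Icc a₂ b₂ ×ˢ Icc a₃ b₃)) :
    (∫ p in a₂..b₂, ∫ q in a₃..b₃, φ' b₁ p q * ψ b₁ p q)
        - (∫ p in a₂..b₂, ∫ q in a₃..b₃, φ' a₁ p q * ψ a₁ p q)
      = ∫ p in a₂..b₂, ∫ q in a₃..b₃, ∫ s in a₁..b₁,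
          (φ'' s p q * ψ s p q - φ s p q * ψ'' s p q) := by
  have hface : ∀ s ∈ Icc a₁ b₁,
      ContinuousOn ↿(fun p q => φ' s p q * ψ s p q) (Icc a₂ b₂ ×ˢ Icc a₃ b₃) := fun s hs =>
    hflux.comp (by fun_prop : Continuous fun pq : ℝ × ℝ => (s, pq)).continuousOn
      fun _ hpq => ⟨hs, hpq⟩
  rw [integral_integral_sub_of_continuousOn h₂ h₃ (hface b₁ (right_mem_Icc.2 h₁))
    (hface a₁ (left_mem_Icc.2 h₁))]
  refine integral_congr fun p hp => integral_congr fun q hq => ?_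
  rw [uIcc_of_le h₂] at hp
  rw [uIcc_of_le h₃] at hq
  rw [← uIcc_of_le h₁] at hφ hφ' hψ hψ' hint
  have hslice : ContinuousOn (fun s => φ'' s p q * ψ s p q - φ s p q * ψ'' s p q) (uIcc a₁ b₁) :=
    hint.comp (by fun_prop : Continuous fun s : ℝ => (s, p, q)).continuousOn
      fun _ hs => ⟨hs, hp, hq⟩
  rw [integral_deriv2_mul_sub_mul_deriv2_eq_sub (fun s hs => hφ s hs p hp q hq)
    (fun s hs => hφ' s hs p hp q hq) (fun s hs => hψ s hs p hp q hq)
    (fun s hs => hψ' s hs p hp q hq) hslice.intervalIntegrable, hφa p hp q hq, hφb p hp q hq]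
  ring

variable {f g : ℝ → ℝ → ℝ → ℝ → ℝ} {O : Set (ℝ × ℝ × ℝ × ℝ)} {t : ℝ}

theorem continuousOn_mul_sub_mul {D : (ℝ → ℝ → ℝ → ℝ → ℝ) → ℝ → ℝ → ℝ → ℝ → ℝ}
    (hf : ContinuousOn ↿f O) (hg : ContinuousOn ↿g O) (hDf : ContinuousOn ↿(D f) O)
    (hDg : ContinuousOn ↿(D g) O) :
    ContinuousOn ↿(fun t x y z => D f t x y z * g t x y z - f t x y z * D g t x y z) O :=
  (hDf.mul hg).sub (hf.mul hDg)

theorem continuousOn_slice {F : ℝ → ℝ → ℝ → ℝ → ℝ} (hF : ContinuousOn ↿F O)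
    (hB : ∀ x ∈ Icc a₁ b₁, ∀ y ∈ Icc a₂ b₂, ∀ z ∈ Icc a₃ b₃, (t, x, y, z) ∈ O) :
    ContinuousOn ↿(F t) (Icc a₁ b₁ ×ˢ Icc a₂ b₂ ×ˢ Icc a₃ b₃) :=
  hF.comp (by fun_prop : Continuous fun p : ℝ × ℝ × ℝ => (t, p)).continuousOn
    fun p hp => hB _ hp.1 _ hp.2.1 _ hp.2.2

theorem integral_boundary_x_eq (hO : IsOpen O) (hf : ContDiffOn ℝ 2 ↿f O)
    (hg : ContDiffOn ℝ 2 ↿g O) (h₁ : a₁ ≤ b₁) (h₂ : a₂ ≤ b₂) (h₃ : a₃ ≤ b₃)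
    (hB : ∀ x ∈ Icc a₁ b₁, ∀ y ∈ Icc a₂ b₂, ∀ z ∈ Icc a₃ b₃, (t, x, y, z) ∈ O)
    (hf₀ : ∀ y ∈ Icc a₂ b₂, ∀ z ∈ Icc a₃ b₃, f t a₁ y z = 0 ∧ f t b₁ y z = 0) :
    (∫ y in a₂..b₂, ∫ z in a₃..b₃, dx4 f t b₁ y z * g t b₁ y z)
        - (∫ y in a₂..b₂, ∫ z in a₃..b₃, dx4 f t a₁ y z * g t a₁ y z)
      = ∫ x in a₁..b₁, ∫ y in a₂..b₂, ∫ z in a₃..b₃,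
          (dxx4 f t x y z * g t x y z - f t x y z * dxx4 g t x y z) := by
  have hS := continuousOn_slice (continuousOn_mul_sub_mul hf.continuousOn hg.continuousOn
    (continuousOn_dxx4 hO hf) (continuousOn_dxx4 hO hg)) hB
  refine (integral_face_sub_integral_face h₁ h₂ h₃
    (fun x hx y hy z hz => hasDerivAt_dx4 hO hf (hB x hx y hy z hz))
    (fun x hx y hy z hz => hasDerivAt_dxx4 hO hf (hB x hx y hy z hz))
    (fun x hx y hy z hz => hasDerivAt_dx4 hO hg (hB x hx y hy z hz))
    (fun x hx y hy z hz => hasDerivAt_dxx4 hO hg (hB x hx y hy z hz))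
    (fun y hy z hz => (hf₀ y hy z hz).1) (fun y hy z hz => (hf₀ y hy z hz).2)
    (continuousOn_slice (F := fun t x y z => dx4 f t x y z * g t x y z)
      ((continuousOn_dx4 hO hf).mul hg.continuousOn) hB) hS).trans ?_
  exact integral_yzx_eq_integral_xyz h₁ h₂ h₃ hS

theorem integral_boundary_y_eq (hO : IsOpen O) (hf : ContDiffOn ℝ 2 ↿f O)
    (hg : ContDiffOn ℝ 2 ↿g O) (h₁ : a₁ ≤ b₁) (h₂ : a₂ ≤ b₂) (h₃ : a₃ ≤ b₃)
    (hB : ∀ x ∈ Icc a₁ b₁, ∀ y ∈ Icc a₂ b₂, ∀ z ∈ Icc a₃ b₃, (t, x, y, z) ∈ O)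
    (hf₀ : ∀ x ∈ Icc a₁ b₁, ∀ z ∈ Icc a₃ b₃, f t x a₂ z = 0 ∧ f t x b₂ z = 0) :
    (∫ x in a₁..b₁, ∫ z in a₃..b₃, dy4 f t x b₂ z * g t x b₂ z)
        - (∫ x in a₁..b₁, ∫ z in a₃..b₃, dy4 f t x a₂ z * g t x a₂ z)
      = ∫ x in a₁..b₁, ∫ y in a₂..b₂, ∫ z in a₃..b₃,
          (dyy4 f t x y z * g t x y z - f t x y z * dyy4 g t x y z) := by
  have hslice : ∀ {F : ℝ × ℝ × ℝ × ℝ → ℝ}, ContinuousOn F O →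
      ContinuousOn (fun u : ℝ × ℝ × ℝ => F (t, u.2.1, u.1, u.2.2))
        (Icc a₂ b₂ ×ˢ Icc a₁ b₁ ×ˢ Icc a₃ b₃) :=
    fun hF => hF.comp
      (by fun_prop : Continuous fun u : ℝ × ℝ × ℝ => (t, u.2.1, u.1, u.2.2)).continuousOn
      fun u hu => hB _ hu.2.1 _ hu.1 _ hu.2.2
  have hS4 := continuousOn_mul_sub_mul hf.continuousOn hg.continuousOn
    (continuousOn_dyy4 hO hf) (continuousOn_dyy4 hO hg)
  refine (integral_face_sub_integral_face (φ := fun s p q => f t p s q)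
    (φ' := fun s p q => dy4 f t p s q) (φ'' := fun s p q => dyy4 f t p s q)
    (ψ := fun s p q => g t p s q) (ψ' := fun s p q => dy4 g t p s q)
    (ψ'' := fun s p q => dyy4 g t p s q) h₂ h₁ h₃
    (fun y hy x hx z hz => hasDerivAt_dy4 hO hf (hB x hx y hy z hz))
    (fun y hy x hx z hz => hasDerivAt_dyy4 hO hf (hB x hx y hy z hz))
    (fun y hy x hx z hz => hasDerivAt_dy4 hO hg (hB x hx y hy z hz))
    (fun y hy x hx z hz => hasDerivAt_dyy4 hO hg (hB x hx y hy z hz))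
    (fun x hx z hz => (hf₀ x hx z hz).1) (fun x hx z hz => (hf₀ x hx z hz).2)
    (hslice ((continuousOn_dy4 hO hf).mul hg.continuousOn))
    (hslice hS4)).trans ?_
  exact integral_xzy_eq_integral_xyz h₁ h₂ h₃ (continuousOn_slice hS4 hB)

theorem integral_boundary_z_eq (hO : IsOpen O) (hf : ContDiffOn ℝ 2 ↿f O)
    (hg : ContDiffOn ℝ 2 ↿g O) (h₁ : a₁ ≤ b₁) (h₂ : a₂ ≤ b₂) (h₃ : a₃ ≤ b₃)
    (hB : ∀ x ∈ Icc a₁ b₁, ∀ y ∈ Icc a₂ b₂, ∀ z ∈ Icc a₃ b₃, (t, x, y, z) ∈ O)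
    (hf₀ : ∀ x ∈ Icc a₁ b₁, ∀ y ∈ Icc a₂ b₂, f t x y a₃ = 0 ∧ f t x y b₃ = 0) :
    (∫ x in a₁..b₁, ∫ y in a₂..b₂, dz4 f t x y b₃ * g t x y b₃)
        - (∫ x in a₁..b₁, ∫ y in a₂..b₂, dz4 f t x y a₃ * g t x y a₃)
      = ∫ x in a₁..b₁, ∫ y in a₂..b₂, ∫ z in a₃..b₃,
          (dzz4 f t x y z * g t x y z - f t x y z * dzz4 g t x y z) := by
  have hslice : ∀ {F : ℝ × ℝ × ℝ × ℝ → ℝ}, ContinuousOn F O →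
      ContinuousOn (fun u : ℝ × ℝ × ℝ => F (t, u.2.1, u.2.2, u.1))
        (Icc a₃ b₃ ×ˢ Icc a₁ b₁ ×ˢ Icc a₂ b₂) :=
    fun hF => hF.comp
      (by fun_prop : Continuous fun u : ℝ × ℝ × ℝ => (t, u.2.1, u.2.2, u.1)).continuousOn
      fun u hu => hB _ hu.2.1 _ hu.2.2 _ hu.1
  exact integral_face_sub_integral_face (φ := fun s p q => f t p q s)
    (φ' := fun s p q => dz4 f t p q s) (φ'' := fun s p q => dzz4 f t p q s)
    (ψ := fun s p q => g t p q s) (ψ' := fun s p q => dz4 g t p q s)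
    (ψ'' := fun s p q => dzz4 g t p q s) h₃ h₁ h₂
    (fun z hz x hx y hy => hasDerivAt_dz4 hO hf (hB x hx y hy z hz))
    (fun z hz x hx y hy => hasDerivAt_dzz4 hO hf (hB x hx y hy z hz))
    (fun z hz x hx y hy => hasDerivAt_dz4 hO hg (hB x hx y hy z hz))
    (fun z hz x hx y hy => hasDerivAt_dzz4 hO hg (hB x hx y hy z hz))
    (fun x hx y hy => (hf₀ x hx y hy).1) (fun x hx y hy => (hf₀ x hx y hy).2)
    (hslice ((continuousOn_dz4 hO hf).mul hg.continuousOn))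
    (hslice (continuousOn_mul_sub_mul hf.continuousOn hg.continuousOn
      (continuousOn_dzz4 hO hf) (continuousOn_dzz4 hO hg)))

theorem integral_boundary_eq_integral_lap (hO : IsOpen O) (hf : ContDiffOn ℝ 2 ↿f O)
    (hg : ContDiffOn ℝ 2 ↿g O) (h₁ : a₁ ≤ b₁) (h₂ : a₂ ≤ b₂) (h₃ : a₃ ≤ b₃)
    (hB : ∀ x ∈ Icc a₁ b₁, ∀ y ∈ Icc a₂ b₂, ∀ z ∈ Icc a₃ b₃, (t, x, y, z) ∈ O)
    (hf₀ : ∀ x ∈ Icc a₁ b₁, ∀ y ∈ Icc a₂ b₂, ∀ z ∈ Icc a₃ b₃,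
      (x = a₁ ∨ x = b₁ ∨ y = a₂ ∨ y = b₂ ∨ z = a₃ ∨ z = b₃) → f t x y z = 0) :
    ((∫ y in a₂..b₂, ∫ z in a₃..b₃, dx4 f t b₁ y z * g t b₁ y z)
          - (∫ y in a₂..b₂, ∫ z in a₃..b₃, dx4 f t a₁ y z * g t a₁ y z)
          + ((∫ x in a₁..b₁, ∫ z in a₃..b₃, dy4 f t x b₂ z * g t x b₂ z)
            - (∫ x in a₁..b₁, ∫ z in a₃..b₃, dy4 f t x a₂ z * g t x a₂ z))
          + ((∫ x in a₁..b₁, ∫ y in a₂..b₂, dz4 f t x y b₃ * g t x y b₃)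
            - (∫ x in a₁..b₁, ∫ y in a₂..b₂, dz4 f t x y a₃ * g t x y a₃)))
      = ∫ x in a₁..b₁, ∫ y in a₂..b₂, ∫ z in a₃..b₃,
          (lap4 f t x y z * g t x y z - f t x y z * lap4 g t x y z) := by
  have ha₁ := left_mem_Icc.2 h₁
  have hb₁ := right_mem_Icc.2 h₁
  have ha₂ := left_mem_Icc.2 h₂
  have hb₂ := right_mem_Icc.2 h₂
  have ha₃ := left_mem_Icc.2 h₃
  have hb₃ := right_mem_Icc.2 h₃
  have hS : ∀ D : (ℝ → ℝ → ℝ → ℝ → ℝ) → ℝ → ℝ → ℝ → ℝ → ℝ,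
      ContinuousOn ↿(D f) O → ContinuousOn ↿(D g) O →
      ContinuousOn ↿(fun x y z => D f t x y z * g t x y z - f t x y z * D g t x y z)
        (Icc a₁ b₁ ×ˢ Icc a₂ b₂ ×ˢ Icc a₃ b₃) := fun D hDf hDg =>
    continuousOn_slice (continuousOn_mul_sub_mul hf.continuousOn hg.continuousOn hDf hDg) hB
  have hSx := hS _ (continuousOn_dxx4 hO hf) (continuousOn_dxx4 hO hg)
  have hSy := hS _ (continuousOn_dyy4 hO hf) (continuousOn_dyy4 hO hg)
  have hSz := hS _ (continuousOn_dzz4 hO hf) (continuousOn_dzz4 hO hg)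
  rw [integral_boundary_x_eq hO hf hg h₁ h₂ h₃ hB
      fun y hy z hz => ⟨hf₀ _ ha₁ y hy z hz (by simp), hf₀ _ hb₁ y hy z hz (by simp)⟩,
    integral_boundary_y_eq hO hf hg h₁ h₂ h₃ hB
      fun x hx z hz => ⟨hf₀ x hx _ ha₂ z hz (by simp), hf₀ x hx _ hb₂ z hz (by simp)⟩,
    integral_boundary_z_eq hO hf hg h₁ h₂ h₃ hB
      fun x hx y hy => ⟨hf₀ x hx y hy _ ha₃ (by simp), hf₀ x hx y hy _ hb₃ (by simp)⟩,
    ← integral_xyz_add h₁ h₂ h₃ hSx hSy, ← integral_xyz_add h₁ h₂ h₃ (hSx.add hSy) hSz]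
  refine integral_congr fun x _ => integral_congr fun y _ => integral_congr fun z _ => ?_
  simp only [lap4_eq]
  ring

end Green

theorem integral_lap_mul_sub_mul_lap_eq {U w v : ℝ → ℝ → ℝ → ℝ → ℝ} {O : Set (ℝ × ℝ × ℝ × ℝ)}
    {a b x y z k β : ℝ} (hO : IsOpen O) (hU : ContDiffOn ℝ 2 ↿U O) (hw : ContDiffOn ℝ 2 ↿w O)
    (hv : ContDiffOn ℝ 2 ↿v O) (hab : a ≤ b) (hB : ∀ t ∈ Icc a b, (t, x, y, z) ∈ O)
    (hLU : ∀ t ∈ Ioo a b, k * dt4sq U t x y z - lap4 U t x y z = 2 * β * dt4sq w t x y z)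
    (hLv : ∀ t ∈ Ioo a b, k * dt4sq v t x y z - lap4 v t x y z = 0)
    (hUa : U a x y z = 0) (hU'a : dt4 U a x y z = 0) (hw'a : dt4 w a x y z = 0)
    (hvb : v b x y z = 0) (hv'b : dt4 v b x y z = 0) :
    ∫ t in a..b, (lap4 U t x y z * v t x y z - U t x y z * lap4 v t x y z)
      = 2 * ∫ t in a..b, β * dt4 w t x y z * dt4 v t x y z := by
  rw [← uIcc_of_le hab] at hB
  rw [← uIoo_of_le hab] at hLU hLv
  have hline : ∀ {F : ℝ → ℝ → ℝ → ℝ → ℝ}, ContinuousOn ↿F O →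
      ContinuousOn (fun t => F t x y z) (uIcc a b) := fun hF =>
    hF.comp (by fun_prop : Continuous fun t : ℝ => (t, x, y, z)).continuousOn hB
  exact integral_mul_sub_mul_eq_of_wave_eq (fun t ht => hasDerivAt_dt4 hO hU (hB t ht))
    (fun t ht => hasDerivAt_dt4sq hO hU (hB t ht)) (fun t ht => hasDerivAt_dt4 hO hv (hB t ht))
    (fun t ht => hasDerivAt_dt4sq hO hv (hB t ht)) (fun t ht => hasDerivAt_dt4sq hO hw (hB t ht))
    (hline (continuousOn_dt4sq hO hU)) (hline (continuousOn_dt4sq hO hv))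
    (hline (continuousOn_dt4sq hO hw)) hLU hLv hUa hU'a hw'a hvb hv'b

theorem stmt_11_general (a₁ b₁ a₂ b₂ a₃ b₃ T : ℝ)
    (h₁ : a₁ < b₁) (h₂ : a₂ < b₂) (h₃ : a₃ < b₃) (hT : 0 < T)
    (c : ℝ → ℝ → ℝ → ℝ)
    (β : ℝ → ℝ → ℝ → ℝ)
    (hβ_cont : Continuous fun q : ℝ × ℝ × ℝ => β q.1 q.2.1 q.2.2)
    (U w u₀ : ℝ → ℝ → ℝ → ℝ → ℝ)
    -- U, w, u₀ are C² on a neighborhood of [0,T] × closure(Ω)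
    (hU : ∃ O : Set (ℝ × ℝ × ℝ × ℝ), IsOpen O ∧
      Icc 0 T ×ˢ Icc a₁ b₁ ×ˢ Icc a₂ b₂ ×ˢ Icc a₃ b₃ ⊆ O ∧
      ContDiffOn ℝ 2 (fun q : ℝ × ℝ × ℝ × ℝ => U q.1 q.2.1 q.2.2.1 q.2.2.2) O)
    (hw : ∃ O : Set (ℝ × ℝ × ℝ × ℝ), IsOpen O ∧
      Icc 0 T ×ˢ Icc a₁ b₁ ×ˢ Icc a₂ b₂ ×ˢ Icc a₃ b₃ ⊆ O ∧
      ContDiffOn ℝ 2 (fun q : ℝ × ℝ × ℝ × ℝ => w q.1 q.2.1 q.2.2.1 q.2.2.2) O)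
    (hu₀ : ∃ O : Set (ℝ × ℝ × ℝ × ℝ), IsOpen O ∧
      Icc 0 T ×ˢ Icc a₁ b₁ ×ˢ Icc a₂ b₂ ×ˢ Icc a₃ b₃ ⊆ O ∧
      ContDiffOn ℝ 2 (fun q : ℝ × ℝ × ℝ × ℝ => u₀ q.1 q.2.1 q.2.2.1 q.2.2.2) O)
    -- (i) the wave equation for U with source 2β ∂t²w on (0,T) × Ω
    (hiU : ∀ t ∈ Ioo 0 T, ∀ x ∈ Ioo a₁ b₁, ∀ y ∈ Ioo a₂ b₂, ∀ z ∈ Ioo a₃ b₃,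
      (c x y z ^ 2)⁻¹ * dt4sq U t x y z - lap4 U t x y z
        = 2 * β x y z * dt4sq w t x y z)
    -- (ii) U vanishes on (0,T) × ∂Ω
    (hiiU : ∀ t ∈ Ioo 0 T, ∀ x ∈ Icc a₁ b₁, ∀ y ∈ Icc a₂ b₂, ∀ z ∈ Icc a₃ b₃,
      (x = a₁ ∨ x = b₁ ∨ y = a₂ ∨ y = b₂ ∨ z = a₃ ∨ z = b₃) → U t x y z = 0)
    -- (iii) U, ∂t U, w, ∂t w vanish at t = 0 on closure(Ω)
    (hiii : ∀ x ∈ Icc a₁ b₁, ∀ y ∈ Icc a₂ b₂, ∀ z ∈ Icc a₃ b₃,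
      U 0 x y z = 0 ∧ dt4 U 0 x y z = 0 ∧ w 0 x y z = 0 ∧ dt4 w 0 x y z = 0)
    -- (iv) the homogeneous wave equation for u₀ on (0,T) × Ω
    (hiv : ∀ t ∈ Ioo 0 T, ∀ x ∈ Ioo a₁ b₁, ∀ y ∈ Ioo a₂ b₂, ∀ z ∈ Ioo a₃ b₃,
      (c x y z ^ 2)⁻¹ * dt4sq u₀ t x y z - lap4 u₀ t x y z = 0)
    -- (v) u₀ and ∂t u₀ vanish at t = T on closure(Ω)
    (hv : ∀ x ∈ Icc a₁ b₁, ∀ y ∈ Icc a₂ b₂, ∀ z ∈ Icc a₃ b₃,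
      u₀ T x y z = 0 ∧ dt4 u₀ T x y z = 0) :
    (∫ t in (0 : ℝ)..T,
        ((∫ y in a₂..b₂, ∫ z in a₃..b₃, dx4 U t b₁ y z * u₀ t b₁ y z)
          - (∫ y in a₂..b₂, ∫ z in a₃..b₃, dx4 U t a₁ y z * u₀ t a₁ y z)
          + ((∫ x in a₁..b₁, ∫ z in a₃..b₃, dy4 U t x b₂ z * u₀ t x b₂ z)
            - (∫ x in a₁..b₁, ∫ z in a₃..b₃, dy4 U t x a₂ z * u₀ t x a₂ z))
          + ((∫ x in a₁..b₁, ∫ y in a₂..b₂, dz4 U t x y b₃ * u₀ t x y b₃)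
            - (∫ x in a₁..b₁, ∫ y in a₂..b₂, dz4 U t x y a₃ * u₀ t x y a₃))))
      = 2 * ∫ t in (0 : ℝ)..T, ∫ x in a₁..b₁, ∫ y in a₂..b₂, ∫ z in a₃..b₃,
          β x y z * dt4 w t x y z * dt4 u₀ t x y z := by
  obtain ⟨O₁, hO₁, hK₁, hU⟩ := hU
  obtain ⟨O₂, hO₂, hK₂, hw⟩ := hw
  obtain ⟨O₃, hO₃, hK₃, hu₀⟩ := hu₀
  set O := O₁ ∩ O₂ ∩ O₃
  have hO : IsOpen O := (hO₁.inter hO₂).inter hO₃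
  have hKO : Icc 0 T ×ˢ Icc a₁ b₁ ×ˢ Icc a₂ b₂ ×ˢ Icc a₃ b₃ ⊆ O := fun q hq =>
    ⟨⟨hK₁ hq, hK₂ hq⟩, hK₃ hq⟩
  replace hU : ContDiffOn ℝ 2 ↿U O := hU.mono fun _ hq => hq.1.1
  replace hw : ContDiffOn ℝ 2 ↿w O := hw.mono fun _ hq => hq.1.2
  replace hu₀ : ContDiffOn ℝ 2 ↿u₀ O := hu₀.mono fun _ hq => hq.2
  have hK : ∀ t ∈ Icc 0 T, ∀ x ∈ Icc a₁ b₁, ∀ y ∈ Icc a₂ b₂, ∀ z ∈ Icc a₃ b₃, (t, x, y, z) ∈ O :=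
    fun t ht x hx y hy z hz => hKO ⟨ht, hx, hy, hz⟩
  calc _ = ∫ t in (0 : ℝ)..T, ∫ x in a₁..b₁, ∫ y in a₂..b₂, ∫ z in a₃..b₃,
          (lap4 U t x y z * u₀ t x y z - U t x y z * lap4 u₀ t x y z) :=
        integral_congr_Ioo_of_le hT.le fun t ht =>
          integral_boundary_eq_integral_lap hO hU hu₀ h₁.le h₂.le h₃.le
            (hK t (Ioo_subset_Icc_self ht)) (hiiU t ht)
    _ = ∫ x in a₁..b₁, ∫ y in a₂..b₂, ∫ z in a₃..b₃, ∫ t in (0 : ℝ)..T,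
          (lap4 U t x y z * u₀ t x y z - U t x y z * lap4 u₀ t x y z) :=
        integral_txyz_eq_integral_xyzt hT.le h₁.le h₂.le h₃.le
          ((continuousOn_mul_sub_mul hU.continuousOn hu₀.continuousOn (continuousOn_lap4 hO hU)
            (continuousOn_lap4 hO hu₀)).mono hKO)
    _ = ∫ x in a₁..b₁, ∫ y in a₂..b₂, ∫ z in a₃..b₃,
          2 * ∫ t in (0 : ℝ)..T, β x y z * dt4 w t x y z * dt4 u₀ t x y z :=
        integral_congr_Ioo_of_le h₁.le fun x hx => integral_congr_Ioo_of_le h₂.le fun y hy =>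
          integral_congr_Ioo_of_le h₃.le fun z hz => by
            have hx' := Ioo_subset_Icc_self hx
            have hy' := Ioo_subset_Icc_self hy
            have hz' := Ioo_subset_Icc_self hz
            obtain ⟨hU₀, hU'₀, -, hw'₀⟩ := hiii x hx' y hy' z hz'
            obtain ⟨hu₀T, hu₀'T⟩ := hv x hx' y hy' z hz'
            exact integral_lap_mul_sub_mul_lap_eq hO hU hw hu₀ hT.le
              (fun t ht => hK t ht x hx' y hy' z hz') (fun t ht => hiU t ht x hx y hy z hz)
              (fun t ht => hiv t ht x hx y hy z hz) hU₀ hU'₀ hw'₀ hu₀T hu₀'T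
    _ = _ := by
        simp only [intervalIntegral.integral_const_mul]
        rw [integral_txyz_eq_integral_xyzt hT.le h₁.le h₂.le h₃.le
          ((((hβ_cont.comp continuous_snd).continuousOn.mul (continuousOn_dt4 hO hw)).mul
            (continuousOn_dt4 hO hu₀)).mono hKO)]

/-- the integration-by-parts identity
∫₀ᵀ∫_{∂Ω} (∂_ν U)·u₀ dS dt = 2∫₀ᵀ∫_Ω β·∂t w·∂t u₀ dx dt
for an open rectangular box Ω = (a₁,b₁)×(a₂,b₂)×(a₃,b₃), under hypotheses (i)–(v). -/
theorem stmt_11 (a₁ b₁ a₂ b₂ a₃ b₃ T : ℝ)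
    (h₁ : a₁ < b₁) (h₂ : a₂ < b₂) (h₃ : a₃ < b₃) (hT : 0 < T)
    (c : ℝ → ℝ → ℝ → ℝ)
    (hc_cont : Continuous fun q : ℝ × ℝ × ℝ => c q.1 q.2.1 q.2.2)
    (hc_pos : ∀ x y z, 0 < c x y z)
    (β : ℝ → ℝ → ℝ → ℝ)
    (hβ_cont : Continuous fun q : ℝ × ℝ × ℝ => β q.1 q.2.1 q.2.2)
    (U w u₀ : ℝ → ℝ → ℝ → ℝ → ℝ)
    -- U, w, u₀ are C² on a neighborhood of [0,T] × closure(Ω)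
    (hU : ∃ O : Set (ℝ × ℝ × ℝ × ℝ), IsOpen O ∧
      Icc 0 T ×ˢ Icc a₁ b₁ ×ˢ Icc a₂ b₂ ×ˢ Icc a₃ b₃ ⊆ O ∧
      ContDiffOn ℝ 2 (fun q : ℝ × ℝ × ℝ × ℝ => U q.1 q.2.1 q.2.2.1 q.2.2.2) O)
    (hw : ∃ O : Set (ℝ × ℝ × ℝ × ℝ), IsOpen O ∧
      Icc 0 T ×ˢ Icc a₁ b₁ ×ˢ Icc a₂ b₂ ×ˢ Icc a₃ b₃ ⊆ O ∧
      ContDiffOn ℝ 2 (fun q : ℝ × ℝ × ℝ × ℝ => w q.1 q.2.1 q.2.2.1 q.2.2.2) O)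
    (hu₀ : ∃ O : Set (ℝ × ℝ × ℝ × ℝ), IsOpen O ∧
      Icc 0 T ×ˢ Icc a₁ b₁ ×ˢ Icc a₂ b₂ ×ˢ Icc a₃ b₃ ⊆ O ∧
      ContDiffOn ℝ 2 (fun q : ℝ × ℝ × ℝ × ℝ => u₀ q.1 q.2.1 q.2.2.1 q.2.2.2) O)
    -- (i) the wave equation for U with source 2β ∂t²w on (0,T) × Ω
    (hiU : ∀ t ∈ Ioo 0 T, ∀ x ∈ Ioo a₁ b₁, ∀ y ∈ Ioo a₂ b₂, ∀ z ∈ Ioo a₃ b₃,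
      (c x y z ^ 2)⁻¹ * dt4sq U t x y z - lap4 U t x y z
        = 2 * β x y z * dt4sq w t x y z)
    -- (ii) U vanishes on (0,T) × ∂Ω
    (hiiU : ∀ t ∈ Ioo 0 T, ∀ x ∈ Icc a₁ b₁, ∀ y ∈ Icc a₂ b₂, ∀ z ∈ Icc a₃ b₃,
      (x = a₁ ∨ x = b₁ ∨ y = a₂ ∨ y = b₂ ∨ z = a₃ ∨ z = b₃) → U t x y z = 0)
    -- (iii) U, ∂t U, w, ∂t w vanish at t = 0 on closure(Ω)
    (hiii : ∀ x ∈ Icc a₁ b₁, ∀ y ∈ Icc a₂ b₂, ∀ z ∈ Icc a₃ b₃,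
      U 0 x y z = 0 ∧ dt4 U 0 x y z = 0 ∧ w 0 x y z = 0 ∧ dt4 w 0 x y z = 0)
    -- (iv) the homogeneous wave equation for u₀ on (0,T) × Ω
    (hiv : ∀ t ∈ Ioo 0 T, ∀ x ∈ Ioo a₁ b₁, ∀ y ∈ Ioo a₂ b₂, ∀ z ∈ Ioo a₃ b₃,
      (c x y z ^ 2)⁻¹ * dt4sq u₀ t x y z - lap4 u₀ t x y z = 0)
    -- (v) u₀ and ∂t u₀ vanish at t = T on closure(Ω)
    (hv : ∀ x ∈ Icc a₁ b₁, ∀ y ∈ Icc a₂ b₂, ∀ z ∈ Icc a₃ b₃,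
      u₀ T x y z = 0 ∧ dt4 u₀ T x y z = 0) :
    (∫ t in (0 : ℝ)..T,
        ((∫ y in a₂..b₂, ∫ z in a₃..b₃, dx4 U t b₁ y z * u₀ t b₁ y z)
          - (∫ y in a₂..b₂, ∫ z in a₃..b₃, dx4 U t a₁ y z * u₀ t a₁ y z)
          + ((∫ x in a₁..b₁, ∫ z in a₃..b₃, dy4 U t x b₂ z * u₀ t x b₂ z)
            - (∫ x in a₁..b₁, ∫ z in a₃..b₃, dy4 U t x a₂ z * u₀ t x a₂ z))
          + ((∫ x in a₁..b₁, ∫ y in a₂..b₂, dz4 U t x y b₃ * u₀ t x y b₃)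
            - (∫ x in a₁..b₁, ∫ y in a₂..b₂, dz4 U t x y a₃ * u₀ t x y a₃))))
      = 2 * ∫ t in (0 : ℝ)..T, ∫ x in a₁..b₁, ∫ y in a₂..b₂, ∫ z in a₃..b₃,
          β x y z * dt4 w t x y z * dt4 u₀ t x y z :=
  stmt_11_general a₁ b₁ a₂ b₂ a₃ b₃ T h₁ h₂ h₃ hT c β hβ_cont U w u₀ hU hw hu₀ hiU hiiU hiii hiv hv
end

section
/- Let Ω ⊂ ℝ³ be an open rectangular box, let k, θ ∈ ℝ³ satisfy ‖θ‖ = ‖k‖, let β : ℝ³ → ℂ be continuous, and let V : ℝ³ → ℂ be twice continuously differentiable on a neighborhood of closure(Ω) and satisfy ΔV(x) + 4‖k‖²·V(x) = β(x)·e^{2i⟨k,x⟩} for all x ∈ Ω. Then, with φ(x) := e^{−2i⟨θ,x⟩}, one has ∫_Ω β(x)·e^{2i⟨k−θ,x⟩} dx = ∫_{∂Ω} ( (∂_ν V)(x)·φ(x) − V(x)·(∂_ν φ)(x) ) dS(x). -/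
open Set Complex intervalIntegral
open scoped RealInnerProductSpace

/-- The point of ℝ³ (as Euclidean space) with coordinates (x, y, z). -/
noncomputable def vec3 (x y z : ℝ) : EuclideanSpace ℝ (Fin 3) :=
  (WithLp.equiv 2 (Fin 3 → ℝ)).symm ![x, y, z]

/-- Partial derivative of g(x,y,z) in the first variable. -/
noncomputable def dx3 (g : ℝ → ℝ → ℝ → ℂ) (x y z : ℝ) : ℂ :=
  deriv (fun s => g s y z) x

/-- Partial derivative in the second variable. -/
noncomputable def dy3 (g : ℝ → ℝ → ℝ → ℂ) (x y z : ℝ) : ℂ :=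
  deriv (fun s => g x s z) y

/-- Partial derivative in the third variable. -/
noncomputable def dz3 (g : ℝ → ℝ → ℝ → ℂ) (x y z : ℝ) : ℂ :=
  deriv (fun s => g x y s) z

/-- Laplacian of g : ℝ³ → ℂ in coordinates. -/
noncomputable def lap3 (g : ℝ → ℝ → ℝ → ℂ) (x y z : ℝ) : ℂ :=
  deriv (fun s => dx3 g s y z) x + deriv (fun s => dy3 g x s z) y +
    deriv (fun s => dz3 g x y s) z

/-! The plane wave `φ = e^{-2i⟨θ,x⟩}` satisfies `Δφ = -4‖θ‖²φ = -4‖k‖²φ`, so by the Helmholtz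
equation the integrand `β e^{2i⟨k-θ,x⟩} = (ΔV + 4‖k‖²V) φ` equals `ΔV φ - V Δφ`. This is the
divergence of the field with components `∂ⱼV φ - V ∂ⱼφ`, so Green's second identity on the box
gives the boundary integral. Each of the three terms of the divergence is integrated by the
fundamental theorem of calculus in its own variable, after Fubini has moved that variable to
the innermost integral. -/

open MeasureTheory Function

section ParametricIntegral

variable {X E : Type*} [TopologicalSpace X] [NormedAddCommGroup E] [NormedSpace ℝ E]

theorem continuousOn_intervalIntegral_of_continuousOn {g : X → ℝ → E} {s : Set X} {c d : ℝ}
    (hg : ContinuousOn (uncurry g) (s ×ˢ uIcc c d)) :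
    ContinuousOn (fun x => ∫ y in c..d, g x y) s := by
  let clamp : ℝ → uIcc c d := projIcc (c ⊓ d) (c ⊔ d) inf_le_sup
  have hclamp : Continuous fun p : s × ℝ => g p.1 (clamp p.2) :=
    hg.comp_continuous (f := fun p : s × ℝ => ((p.1 : X), (clamp p.2 : ℝ)))
      (by fun_prop) fun p => ⟨p.1.2, (clamp p.2).2⟩
  rw [continuousOn_iff_continuous_domRestrict]
  refine (continuous_parametric_intervalIntegral_of_continuous'
    (μ := volume) (f := fun (x : s) y => g x (clamp y)) hclamp c d).congr fun x => ?_
  exact integral_congr fun y hy => by simp [clamp, projIcc_of_mem _ hy]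

theorem intervalIntegral_intervalIntegral_swap_of_continuousOn {f : ℝ → ℝ → E} {a b c d : ℝ}
    (hf : ContinuousOn (uncurry f) (uIcc a b ×ˢ uIcc c d)) :
    ∫ x in a..b, ∫ y in c..d, f x y = ∫ y in c..d, ∫ x in a..b, f x y :=
  intervalIntegral_intervalIntegral_swap <|
    (hf.integrableOn_compact (isCompact_uIcc.prod isCompact_uIcc)).mono_set
      (prod_mono uIoc_subset_uIcc uIoc_subset_uIcc)

end ParametricIntegral

section Box

variable {E : Type*} [NormedAddCommGroup E] [NormedSpace ℝ E] {a₁ b₁ a₂ b₂ a₃ b₃ : ℝ}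

theorem integral_integral_add_of_continuousOn {f g : ℝ → ℝ → E}
    (hf : ContinuousOn (uncurry f) (uIcc a₁ b₁ ×ˢ uIcc a₂ b₂))
    (hg : ContinuousOn (uncurry g) (uIcc a₁ b₁ ×ˢ uIcc a₂ b₂)) :
    ∫ x in a₁..b₁, ∫ y in a₂..b₂, (f x y + g x y)
      = (∫ x in a₁..b₁, ∫ y in a₂..b₂, f x y) + ∫ x in a₁..b₁, ∫ y in a₂..b₂, g x y := by
  rw [← integral_add (continuousOn_intervalIntegral_of_continuousOn hf).intervalIntegrable
    (continuousOn_intervalIntegral_of_continuousOn hg).intervalIntegrable]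
  exact integral_congr fun x hx => integral_add
    (hf.uncurry_left x hx).intervalIntegrable (hg.uncurry_left x hx).intervalIntegrable

theorem integral_integral_sub_of_continuousOn_s12 {f g : ℝ → ℝ → E}
    (hf : ContinuousOn (uncurry f) (uIcc a₁ b₁ ×ˢ uIcc a₂ b₂))
    (hg : ContinuousOn (uncurry g) (uIcc a₁ b₁ ×ˢ uIcc a₂ b₂)) :
    ∫ x in a₁..b₁, ∫ y in a₂..b₂, (f x y - g x y)
      = (∫ x in a₁..b₁, ∫ y in a₂..b₂, f x y) - ∫ x in a₁..b₁, ∫ y in a₂..b₂, g x y := by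
  rw [← integral_sub (continuousOn_intervalIntegral_of_continuousOn hf).intervalIntegrable
    (continuousOn_intervalIntegral_of_continuousOn hg).intervalIntegrable]
  exact integral_congr fun x hx => integral_sub
    (hf.uncurry_left x hx).intervalIntegrable (hg.uncurry_left x hx).intervalIntegrable

variable {F G : ℝ → ℝ → ℝ → E}

theorem continuousOn_integral_third
    (hF : ContinuousOn ↿F (uIcc a₁ b₁ ×ˢ uIcc a₂ b₂ ×ˢ uIcc a₃ b₃)) :
    ContinuousOn (uncurry fun x y => ∫ z in a₃..b₃, F x y z) (uIcc a₁ b₁ ×ˢ uIcc a₂ b₂) :=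
  continuousOn_intervalIntegral_of_continuousOn (g := fun p : ℝ × ℝ => F p.1 p.2) <|
    hF.comp (f := fun q : (ℝ × ℝ) × ℝ => (q.1.1, q.1.2, q.2)) (by fun_prop)
      fun _ hq => ⟨hq.1.1, hq.1.2, hq.2⟩

theorem integral3_add (hF : ContinuousOn ↿F (uIcc a₁ b₁ ×ˢ uIcc a₂ b₂ ×ˢ uIcc a₃ b₃))
    (hG : ContinuousOn ↿G (uIcc a₁ b₁ ×ˢ uIcc a₂ b₂ ×ˢ uIcc a₃ b₃)) :
    ∫ x in a₁..b₁, ∫ y in a₂..b₂, ∫ z in a₃..b₃, (F x y z + G x y z)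
      = (∫ x in a₁..b₁, ∫ y in a₂..b₂, ∫ z in a₃..b₃, F x y z)
        + ∫ x in a₁..b₁, ∫ y in a₂..b₂, ∫ z in a₃..b₃, G x y z := by
  rw [← integral_integral_add_of_continuousOn (continuousOn_integral_third hF)
    (continuousOn_integral_third hG)]
  refine integral_congr fun x hx => integral_congr fun y hy => integral_add ?_ ?_
  · exact ((hF.uncurry_left (f := fun x => ↿(F x)) x hx).uncurry_left y hy).intervalIntegrable
  · exact ((hG.uncurry_left (f := fun x => ↿(G x)) x hx).uncurry_left y hy).intervalIntegrable

theorem integral3_swap_inner (hF : ContinuousOn ↿F (uIcc a₁ b₁ ×ˢ uIcc a₂ b₂ ×ˢ uIcc a₃ b₃)) :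
    ∫ x in a₁..b₁, ∫ y in a₂..b₂, ∫ z in a₃..b₃, F x y z
      = ∫ x in a₁..b₁, ∫ z in a₃..b₃, ∫ y in a₂..b₂, F x y z :=
  integral_congr fun x hx => intervalIntegral_intervalIntegral_swap_of_continuousOn <|
    hF.uncurry_left (f := fun x => ↿(F x)) x hx

theorem integral3_rotate (hF : ContinuousOn ↿F (uIcc a₁ b₁ ×ˢ uIcc a₂ b₂ ×ˢ uIcc a₃ b₃)) :
    ∫ x in a₁..b₁, ∫ y in a₂..b₂, ∫ z in a₃..b₃, F x y z
      = ∫ y in a₂..b₂, ∫ z in a₃..b₃, ∫ x in a₁..b₁, F x y z := by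
  rw [intervalIntegral_intervalIntegral_swap_of_continuousOn (continuousOn_integral_third hF)]
  refine integral_congr fun y hy => intervalIntegral_intervalIntegral_swap_of_continuousOn ?_
  exact hF.comp (f := fun p : ℝ × ℝ => (p.1, y, p.2)) (by fun_prop)
    fun _ hp => ⟨hp.1, hy, hp.2⟩

variable [CompleteSpace E]

theorem integral3_eq_sub_of_hasDerivAt_third
    (hG : ContinuousOn ↿G (uIcc a₁ b₁ ×ˢ uIcc a₂ b₂ ×ˢ uIcc a₃ b₃))
    (hF : ContinuousOn ↿F (uIcc a₁ b₁ ×ˢ uIcc a₂ b₂ ×ˢ uIcc a₃ b₃))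
    (hGF : ∀ x ∈ uIcc a₁ b₁, ∀ y ∈ uIcc a₂ b₂, ∀ z ∈ uIcc a₃ b₃, HasDerivAt (G x y) (F x y z) z) :
    ∫ x in a₁..b₁, ∫ y in a₂..b₂, ∫ z in a₃..b₃, F x y z
      = (∫ x in a₁..b₁, ∫ y in a₂..b₂, G x y b₃) - ∫ x in a₁..b₁, ∫ y in a₂..b₂, G x y a₃ := by
  have hface : ∀ c ∈ uIcc a₃ b₃,
      ContinuousOn (uncurry fun x y => G x y c) (uIcc a₁ b₁ ×ˢ uIcc a₂ b₂) :=
    fun c hc => hG.comp (f := fun p : ℝ × ℝ => (p.1, p.2, c)) (by fun_prop)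
      fun _ hp => ⟨hp.1, hp.2, hc⟩
  rw [← integral_integral_sub_of_continuousOn_s12 (hface _ right_mem_uIcc) (hface _ left_mem_uIcc)]
  refine integral_congr fun x hx => integral_congr fun y hy => ?_
  exact integral_eq_sub_of_hasDerivAt (hGF x hx y hy)
    ((hF.uncurry_left (f := fun x => ↿(F x)) x hx).uncurry_left y hy).intervalIntegrable

theorem integral3_eq_sub_of_hasDerivAt_second
    (hG : ContinuousOn ↿G (uIcc a₁ b₁ ×ˢ uIcc a₂ b₂ ×ˢ uIcc a₃ b₃))
    (hF : ContinuousOn ↿F (uIcc a₁ b₁ ×ˢ uIcc a₂ b₂ ×ˢ uIcc a₃ b₃))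
    (hGF : ∀ x ∈ uIcc a₁ b₁, ∀ y ∈ uIcc a₂ b₂, ∀ z ∈ uIcc a₃ b₃,
      HasDerivAt (fun s => G x s z) (F x y z) y) :
    ∫ x in a₁..b₁, ∫ y in a₂..b₂, ∫ z in a₃..b₃, F x y z
      = (∫ x in a₁..b₁, ∫ z in a₃..b₃, G x b₂ z) - ∫ x in a₁..b₁, ∫ z in a₃..b₃, G x a₂ z := by
  have hswap : ∀ {H : ℝ → ℝ → ℝ → E}, ContinuousOn ↿H (uIcc a₁ b₁ ×ˢ uIcc a₂ b₂ ×ˢ uIcc a₃ b₃) →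
      ContinuousOn ↿(fun x z y => H x y z) (uIcc a₁ b₁ ×ˢ uIcc a₃ b₃ ×ˢ uIcc a₂ b₂) :=
    fun hH => hH.comp (f := fun q : ℝ × ℝ × ℝ => (q.1, q.2.2, q.2.1)) (by fun_prop)
      fun _ hq => ⟨hq.1, hq.2.2, hq.2.1⟩
  rw [integral3_swap_inner hF]
  exact integral3_eq_sub_of_hasDerivAt_third (hswap hG) (hswap hF)
    fun x hx z hz y hy => hGF x hx y hy z hz

theorem integral3_eq_sub_of_hasDerivAt_first
    (hG : ContinuousOn ↿G (uIcc a₁ b₁ ×ˢ uIcc a₂ b₂ ×ˢ uIcc a₃ b₃))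
    (hF : ContinuousOn ↿F (uIcc a₁ b₁ ×ˢ uIcc a₂ b₂ ×ˢ uIcc a₃ b₃))
    (hGF : ∀ x ∈ uIcc a₁ b₁, ∀ y ∈ uIcc a₂ b₂, ∀ z ∈ uIcc a₃ b₃,
      HasDerivAt (fun s => G s y z) (F x y z) x) :
    ∫ x in a₁..b₁, ∫ y in a₂..b₂, ∫ z in a₃..b₃, F x y z
      = (∫ y in a₂..b₂, ∫ z in a₃..b₃, G b₁ y z) - ∫ y in a₂..b₂, ∫ z in a₃..b₃, G a₁ y z := by
  have hrot : ∀ {H : ℝ → ℝ → ℝ → E}, ContinuousOn ↿H (uIcc a₁ b₁ ×ˢ uIcc a₂ b₂ ×ˢ uIcc a₃ b₃) →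
      ContinuousOn ↿(fun y z x => H x y z) (uIcc a₂ b₂ ×ˢ uIcc a₃ b₃ ×ˢ uIcc a₁ b₁) :=
    fun hH => hH.comp (f := fun q : ℝ × ℝ × ℝ => (q.2.2, q.1, q.2.1)) (by fun_prop)
      fun _ hq => ⟨hq.2.2, hq.1, hq.2.1⟩
  rw [integral3_rotate hF]
  exact integral3_eq_sub_of_hasDerivAt_third (hrot hG) (hrot hF)
    fun y hy z hz x hx => hGF x hx y hy z hz

end Box

theorem hasDerivAt_wronskian {𝔸 : Type*} [NormedCommRing 𝔸] [NormedAlgebra ℝ 𝔸]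
    {u u' w w' : ℝ → 𝔸} {u'' w'' : 𝔸} {t : ℝ}
    (hu : HasDerivAt u (u' t) t) (hu' : HasDerivAt u' u'' t)
    (hw : HasDerivAt w (w' t) t) (hw' : HasDerivAt w' w'' t) :
    HasDerivAt (fun s => u' s * w s - u s * w' s) (u'' * w t - u t * w'') t :=
  ((hu'.fun_mul hw).fun_sub (hu.fun_mul hw')).congr_deriv (by ring)

section PartialDerivatives

variable {u : ℝ → ℝ → ℝ → ℂ} {O : Set (ℝ × ℝ × ℝ)} {x y z : ℝ} {m n : WithTop ℕ∞}

theorem lap3_eq (u : ℝ → ℝ → ℝ → ℂ) (x y z : ℝ) :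
    lap3 u x y z = dx3 (dx3 u) x y z + dy3 (dy3 u) x y z + dz3 (dz3 u) x y z :=
  rfl

theorem hasDerivAt_dx3 (hu : DifferentiableAt ℝ ↿u (x, y, z)) :
    HasDerivAt (fun s => u s y z) (dx3 u x y z) x := by
  have hline : DifferentiableAt ℝ (fun s : ℝ => (s, y, z)) x := by fun_prop
  exact (hu.comp x hline).hasDerivAt

theorem hasDerivAt_dy3 (hu : DifferentiableAt ℝ ↿u (x, y, z)) :
    HasDerivAt (fun s => u x s z) (dy3 u x y z) y := by
  have hline : DifferentiableAt ℝ (fun s : ℝ => (x, s, z)) y := by fun_prop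
  exact (hu.comp y hline).hasDerivAt

theorem hasDerivAt_dz3 (hu : DifferentiableAt ℝ ↿u (x, y, z)) :
    HasDerivAt (fun s => u x y s) (dz3 u x y z) z := by
  have hline : DifferentiableAt ℝ (fun s : ℝ => (x, y, s)) z := by fun_prop
  exact (hu.comp z hline).hasDerivAt

theorem dx3_eq_fderiv (hu : DifferentiableAt ℝ ↿u (x, y, z)) :
    dx3 u x y z = fderiv ℝ ↿u (x, y, z) (1, 0, 0) := by
  have hline : HasDerivAt (fun s : ℝ => (s, y, z)) (1, 0, 0) x :=
    (hasDerivAt_id' x).prodMk (hasDerivAt_const x (y, z))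
  exact (hu.hasFDerivAt.comp_hasDerivAt x hline).deriv

theorem dy3_eq_fderiv (hu : DifferentiableAt ℝ ↿u (x, y, z)) :
    dy3 u x y z = fderiv ℝ ↿u (x, y, z) (0, 1, 0) := by
  have hline : HasDerivAt (fun s : ℝ => (x, s, z)) (0, 1, 0) y :=
    (hasDerivAt_const y x).prodMk ((hasDerivAt_id' y).prodMk (hasDerivAt_const y z))
  exact (hu.hasFDerivAt.comp_hasDerivAt y hline).deriv

theorem dz3_eq_fderiv (hu : DifferentiableAt ℝ ↿u (x, y, z)) :
    dz3 u x y z = fderiv ℝ ↿u (x, y, z) (0, 0, 1) := by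
  have hline : HasDerivAt (fun s : ℝ => (x, y, s)) (0, 0, 1) z :=
    (hasDerivAt_const z x).prodMk ((hasDerivAt_const z y).prodMk (hasDerivAt_id' z))
  exact (hu.hasFDerivAt.comp_hasDerivAt z hline).deriv

theorem ContDiffOn.differentiableAt_of_isOpen (hO : IsOpen O) (hu : ContDiffOn ℝ n ↿u O)
    (hn : n ≠ 0) {q : ℝ × ℝ × ℝ} (hq : q ∈ O) : DifferentiableAt ℝ ↿u q :=
  (hu.contDiffAt (hO.mem_nhds hq)).differentiableAt hn

theorem ContDiffOn.dx3_of_isOpen (hO : IsOpen O) (hu : ContDiffOn ℝ n ↿u O) (hmn : m + 1 ≤ n) :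
    ContDiffOn ℝ m ↿(dx3 u) O :=
  ((hu.fderiv_of_isOpen hO hmn).clm_apply contDiffOn_const).congr fun _ hq =>
    dx3_eq_fderiv (hu.differentiableAt_of_isOpen hO (by rintro rfl; simp at hmn) hq)

theorem ContDiffOn.dy3_of_isOpen (hO : IsOpen O) (hu : ContDiffOn ℝ n ↿u O) (hmn : m + 1 ≤ n) :
    ContDiffOn ℝ m ↿(dy3 u) O :=
  ((hu.fderiv_of_isOpen hO hmn).clm_apply contDiffOn_const).congr fun _ hq =>
    dy3_eq_fderiv (hu.differentiableAt_of_isOpen hO (by rintro rfl; simp at hmn) hq)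

theorem ContDiffOn.dz3_of_isOpen (hO : IsOpen O) (hu : ContDiffOn ℝ n ↿u O) (hmn : m + 1 ≤ n) :
    ContDiffOn ℝ m ↿(dz3 u) O :=
  ((hu.fderiv_of_isOpen hO hmn).clm_apply contDiffOn_const).congr fun _ hq =>
    dz3_eq_fderiv (hu.differentiableAt_of_isOpen hO (by rintro rfl; simp at hmn) hq)

end PartialDerivatives

section Green

variable {u w : ℝ → ℝ → ℝ → ℂ} {O : Set (ℝ × ℝ × ℝ)} {a₁ b₁ a₂ b₂ a₃ b₃ : ℝ}

theorem integral3_flux_first (hO : IsOpen O) (hbox : uIcc a₁ b₁ ×ˢ uIcc a₂ b₂ ×ˢ uIcc a₃ b₃ ⊆ O)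
    (hu : ContDiffOn ℝ 2 ↿u O) (hw : ContDiffOn ℝ 2 ↿w O) :
    ∫ x in a₁..b₁, ∫ y in a₂..b₂, ∫ z in a₃..b₃,
        (dx3 (dx3 u) x y z * w x y z - u x y z * dx3 (dx3 w) x y z)
      = (∫ y in a₂..b₂, ∫ z in a₃..b₃, dx3 u b₁ y z * w b₁ y z - u b₁ y z * dx3 w b₁ y z)
        - ∫ y in a₂..b₂, ∫ z in a₃..b₃, dx3 u a₁ y z * w a₁ y z - u a₁ y z * dx3 w a₁ y z := by
  have hu₁ : ContDiffOn ℝ 1 ↿(dx3 u) O := hu.dx3_of_isOpen hO one_add_one_eq_two.le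
  have hw₁ : ContDiffOn ℝ 1 ↿(dx3 w) O := hw.dx3_of_isOpen hO one_add_one_eq_two.le
  have hu₂ : ContDiffOn ℝ 0 ↿(dx3 (dx3 u)) O := hu₁.dx3_of_isOpen hO (zero_add 1).le
  have hw₂ : ContDiffOn ℝ 0 ↿(dx3 (dx3 w)) O := hw₁.dx3_of_isOpen hO (zero_add 1).le
  refine integral3_eq_sub_of_hasDerivAt_first
    (G := fun x y z => dx3 u x y z * w x y z - u x y z * dx3 w x y z)
    (F := fun x y z => dx3 (dx3 u) x y z * w x y z - u x y z * dx3 (dx3 w) x y z)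
    ?_ ?_ fun x hx y hy z hz => ?_
  · exact ((hu₁.continuousOn.mul hw.continuousOn).sub
      (hu.continuousOn.mul hw₁.continuousOn)).mono hbox
  · exact ((hu₂.continuousOn.mul hw.continuousOn).sub
      (hu.continuousOn.mul hw₂.continuousOn)).mono hbox
  · have hq : (x, y, z) ∈ O := hbox ⟨hx, hy, hz⟩
    exact hasDerivAt_wronskian
      (hasDerivAt_dx3 (hu.differentiableAt_of_isOpen hO two_ne_zero hq))
      (hasDerivAt_dx3 (hu₁.differentiableAt_of_isOpen hO one_ne_zero hq))
      (hasDerivAt_dx3 (hw.differentiableAt_of_isOpen hO two_ne_zero hq))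
      (hasDerivAt_dx3 (hw₁.differentiableAt_of_isOpen hO one_ne_zero hq))

theorem integral3_flux_second (hO : IsOpen O) (hbox : uIcc a₁ b₁ ×ˢ uIcc a₂ b₂ ×ˢ uIcc a₃ b₃ ⊆ O)
    (hu : ContDiffOn ℝ 2 ↿u O) (hw : ContDiffOn ℝ 2 ↿w O) :
    ∫ x in a₁..b₁, ∫ y in a₂..b₂, ∫ z in a₃..b₃,
        (dy3 (dy3 u) x y z * w x y z - u x y z * dy3 (dy3 w) x y z)
      = (∫ x in a₁..b₁, ∫ z in a₃..b₃, dy3 u x b₂ z * w x b₂ z - u x b₂ z * dy3 w x b₂ z)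
        - ∫ x in a₁..b₁, ∫ z in a₃..b₃, dy3 u x a₂ z * w x a₂ z - u x a₂ z * dy3 w x a₂ z := by
  have hu₁ : ContDiffOn ℝ 1 ↿(dy3 u) O := hu.dy3_of_isOpen hO one_add_one_eq_two.le
  have hw₁ : ContDiffOn ℝ 1 ↿(dy3 w) O := hw.dy3_of_isOpen hO one_add_one_eq_two.le
  have hu₂ : ContDiffOn ℝ 0 ↿(dy3 (dy3 u)) O := hu₁.dy3_of_isOpen hO (zero_add 1).le
  have hw₂ : ContDiffOn ℝ 0 ↿(dy3 (dy3 w)) O := hw₁.dy3_of_isOpen hO (zero_add 1).le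
  refine integral3_eq_sub_of_hasDerivAt_second
    (G := fun x y z => dy3 u x y z * w x y z - u x y z * dy3 w x y z)
    (F := fun x y z => dy3 (dy3 u) x y z * w x y z - u x y z * dy3 (dy3 w) x y z)
    ?_ ?_ fun x hx y hy z hz => ?_
  · exact ((hu₁.continuousOn.mul hw.continuousOn).sub
      (hu.continuousOn.mul hw₁.continuousOn)).mono hbox
  · exact ((hu₂.continuousOn.mul hw.continuousOn).sub
      (hu.continuousOn.mul hw₂.continuousOn)).mono hbox
  · have hq : (x, y, z) ∈ O := hbox ⟨hx, hy, hz⟩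
    exact hasDerivAt_wronskian
      (hasDerivAt_dy3 (hu.differentiableAt_of_isOpen hO two_ne_zero hq))
      (hasDerivAt_dy3 (hu₁.differentiableAt_of_isOpen hO one_ne_zero hq))
      (hasDerivAt_dy3 (hw.differentiableAt_of_isOpen hO two_ne_zero hq))
      (hasDerivAt_dy3 (hw₁.differentiableAt_of_isOpen hO one_ne_zero hq))

theorem integral3_flux_third (hO : IsOpen O) (hbox : uIcc a₁ b₁ ×ˢ uIcc a₂ b₂ ×ˢ uIcc a₃ b₃ ⊆ O)
    (hu : ContDiffOn ℝ 2 ↿u O) (hw : ContDiffOn ℝ 2 ↿w O) :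
    ∫ x in a₁..b₁, ∫ y in a₂..b₂, ∫ z in a₃..b₃,
        (dz3 (dz3 u) x y z * w x y z - u x y z * dz3 (dz3 w) x y z)
      = (∫ x in a₁..b₁, ∫ y in a₂..b₂, dz3 u x y b₃ * w x y b₃ - u x y b₃ * dz3 w x y b₃)
        - ∫ x in a₁..b₁, ∫ y in a₂..b₂, dz3 u x y a₃ * w x y a₃ - u x y a₃ * dz3 w x y a₃ := by
  have hu₁ : ContDiffOn ℝ 1 ↿(dz3 u) O := hu.dz3_of_isOpen hO one_add_one_eq_two.le
  have hw₁ : ContDiffOn ℝ 1 ↿(dz3 w) O := hw.dz3_of_isOpen hO one_add_one_eq_two.le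
  have hu₂ : ContDiffOn ℝ 0 ↿(dz3 (dz3 u)) O := hu₁.dz3_of_isOpen hO (zero_add 1).le
  have hw₂ : ContDiffOn ℝ 0 ↿(dz3 (dz3 w)) O := hw₁.dz3_of_isOpen hO (zero_add 1).le
  refine integral3_eq_sub_of_hasDerivAt_third
    (G := fun x y z => dz3 u x y z * w x y z - u x y z * dz3 w x y z)
    (F := fun x y z => dz3 (dz3 u) x y z * w x y z - u x y z * dz3 (dz3 w) x y z)
    ?_ ?_ fun x hx y hy z hz => ?_
  · exact ((hu₁.continuousOn.mul hw.continuousOn).sub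
      (hu.continuousOn.mul hw₁.continuousOn)).mono hbox
  · exact ((hu₂.continuousOn.mul hw.continuousOn).sub
      (hu.continuousOn.mul hw₂.continuousOn)).mono hbox
  · have hq : (x, y, z) ∈ O := hbox ⟨hx, hy, hz⟩
    exact hasDerivAt_wronskian
      (hasDerivAt_dz3 (hu.differentiableAt_of_isOpen hO two_ne_zero hq))
      (hasDerivAt_dz3 (hu₁.differentiableAt_of_isOpen hO one_ne_zero hq))
      (hasDerivAt_dz3 (hw.differentiableAt_of_isOpen hO two_ne_zero hq))
      (hasDerivAt_dz3 (hw₁.differentiableAt_of_isOpen hO one_ne_zero hq))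

theorem integral3_lap3_mul_sub_mul_lap3 (hO : IsOpen O)
    (hbox : uIcc a₁ b₁ ×ˢ uIcc a₂ b₂ ×ˢ uIcc a₃ b₃ ⊆ O)
    (hu : ContDiffOn ℝ 2 ↿u O) (hw : ContDiffOn ℝ 2 ↿w O) :
    ∫ x in a₁..b₁, ∫ y in a₂..b₂, ∫ z in a₃..b₃, (lap3 u x y z * w x y z - u x y z * lap3 w x y z)
      = (∫ y in a₂..b₂, ∫ z in a₃..b₃, dx3 u b₁ y z * w b₁ y z - u b₁ y z * dx3 w b₁ y z)
          - (∫ y in a₂..b₂, ∫ z in a₃..b₃, dx3 u a₁ y z * w a₁ y z - u a₁ y z * dx3 w a₁ y z)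
        + ((∫ x in a₁..b₁, ∫ z in a₃..b₃, dy3 u x b₂ z * w x b₂ z - u x b₂ z * dy3 w x b₂ z)
          - (∫ x in a₁..b₁, ∫ z in a₃..b₃, dy3 u x a₂ z * w x a₂ z - u x a₂ z * dy3 w x a₂ z))
        + ((∫ x in a₁..b₁, ∫ y in a₂..b₂, dz3 u x y b₃ * w x y b₃ - u x y b₃ * dz3 w x y b₃)
          - (∫ x in a₁..b₁, ∫ y in a₂..b₂, dz3 u x y a₃ * w x y a₃ - u x y a₃ * dz3 w x y a₃)) := by
  have hsplit : ∀ x y z, lap3 u x y z * w x y z - u x y z * lap3 w x y z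
      = (dx3 (dx3 u) x y z * w x y z - u x y z * dx3 (dx3 w) x y z)
        + (dy3 (dy3 u) x y z * w x y z - u x y z * dy3 (dy3 w) x y z)
        + (dz3 (dz3 u) x y z * w x y z - u x y z * dz3 (dz3 w) x y z) := fun x y z => by
    rw [lap3_eq, lap3_eq]
    ring
  have hcont : ∀ {D : (ℝ → ℝ → ℝ → ℂ) → ℝ → ℝ → ℝ → ℂ},
      (∀ v, ContDiffOn ℝ 2 ↿v O → ContinuousOn ↿(D v) O) →
      ContinuousOn ↿(fun x y z => D u x y z * w x y z - u x y z * D w x y z)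
        (uIcc a₁ b₁ ×ˢ uIcc a₂ b₂ ×ˢ uIcc a₃ b₃) :=
    fun hD => (((hD u hu).mul hw.continuousOn).sub (hu.continuousOn.mul (hD w hw))).mono hbox
  have hx := hcont (D := fun v => dx3 (dx3 v)) fun v hv =>
    ((hv.dx3_of_isOpen hO one_add_one_eq_two.le).dx3_of_isOpen hO (zero_add 1).le).continuousOn
  have hy := hcont (D := fun v => dy3 (dy3 v)) fun v hv =>
    ((hv.dy3_of_isOpen hO one_add_one_eq_two.le).dy3_of_isOpen hO (zero_add 1).le).continuousOn
  have hz := hcont (D := fun v => dz3 (dz3 v)) fun v hv =>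
    ((hv.dz3_of_isOpen hO one_add_one_eq_two.le).dz3_of_isOpen hO (zero_add 1).le).continuousOn
  simp only [hsplit]
  rw [integral3_add (hx.add hy) hz, integral3_add hx hy, integral3_flux_first hO hbox hu hw,
    integral3_flux_second hO hbox hu hw, integral3_flux_third hO hbox hu hw]

end Green

section PlaneWave

theorem inner_vec3 (v : EuclideanSpace ℝ (Fin 3)) (x y z : ℝ) :
    ⟪v, vec3 x y z⟫ = v 0 * x + v 1 * y + v 2 * z := by
  simp [vec3, PiLp.inner_apply, Fin.sum_univ_three]
  ring

theorem deriv_deriv_cexp_mul_add (α β : ℂ) (t : ℝ) :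
    deriv (deriv fun s : ℝ => cexp (α * s + β)) t = α ^ 2 * cexp (α * t + β) := by
  have h : ∀ s : ℝ, HasDerivAt (fun s : ℝ => cexp (α * s + β)) (α * cexp (α * s + β)) s :=
    fun s => by
      simpa [mul_comm] using ((((hasDerivAt_id (s : ℂ)).comp_ofReal).const_mul α).add_const β).cexp
  rw [funext fun s => (h s).deriv, ((h t).const_mul α).deriv]
  ring

variable (c : ℂ) (θ : EuclideanSpace ℝ (Fin 3))

theorem contDiff_cexp_inner_vec3 {n : WithTop ℕ∞} :
    ContDiff ℝ n ↿(fun x y z => cexp (c * (⟪θ, vec3 x y z⟫ : ℝ))) := by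
  have h : ↿(fun x y z => cexp (c * (⟪θ, vec3 x y z⟫ : ℝ)))
      = fun q : ℝ × ℝ × ℝ => cexp (c * ((θ 0 * q.1 + θ 1 * q.2.1 + θ 2 * q.2.2 : ℝ) : ℂ)) :=
    funext fun q => by rw [← inner_vec3]; rfl
  have hlin : ContDiff ℝ n fun q : ℝ × ℝ × ℝ => θ 0 * q.1 + θ 1 * q.2.1 + θ 2 * q.2.2 := by
    fun_prop
  rw [h]
  exact (contDiff_const.mul (ofRealCLM.contDiff.comp hlin)).cexp

theorem lap3_cexp_inner_vec3 (x y z : ℝ) :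
    lap3 (fun x y z => cexp (c * (⟪θ, vec3 x y z⟫ : ℝ))) x y z
      = c ^ 2 * (‖θ‖ : ℂ) ^ 2 * cexp (c * (⟪θ, vec3 x y z⟫ : ℝ)) := by
  have hx : (fun s => cexp (c * (⟪θ, vec3 s y z⟫ : ℝ)))
      = fun s : ℝ => cexp (c * θ 0 * s + c * (θ 1 * y + θ 2 * z)) := by
    funext s; rw [inner_vec3]; push_cast; ring_nf
  have hy : (fun s => cexp (c * (⟪θ, vec3 x s z⟫ : ℝ)))
      = fun s : ℝ => cexp (c * θ 1 * s + c * (θ 0 * x + θ 2 * z)) := by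
    funext s; rw [inner_vec3]; push_cast; ring_nf
  have hz : (fun s => cexp (c * (⟪θ, vec3 x y s⟫ : ℝ)))
      = fun s : ℝ => cexp (c * θ 2 * s + c * (θ 0 * x + θ 1 * y)) := by
    funext s; rw [inner_vec3]; push_cast; ring_nf
  rw [lap3_eq]
  change deriv (deriv _) x + deriv (deriv _) y + deriv (deriv _) z = _
  rw [hx, hy, hz, deriv_deriv_cexp_mul_add, deriv_deriv_cexp_mul_add, deriv_deriv_cexp_mul_add,
    ← ofReal_pow, EuclideanSpace.real_norm_sq_eq, Fin.sum_univ_three, inner_vec3]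
  push_cast
  ring_nf

end PlaneWave

theorem stmt_12_general (a₁ b₁ a₂ b₂ a₃ b₃ : ℝ)
    (h₁ : a₁ < b₁) (h₂ : a₂ < b₂) (h₃ : a₃ < b₃)
    (k θ : EuclideanSpace ℝ (Fin 3)) (hkθ : ‖θ‖ = ‖k‖)
    (β : ℝ → ℝ → ℝ → ℂ)
    (V : ℝ → ℝ → ℝ → ℂ)
    -- V is C² on a neighborhood of closure(Ω)
    (hV : ∃ O : Set (ℝ × ℝ × ℝ), IsOpen O ∧
      Icc a₁ b₁ ×ˢ Icc a₂ b₂ ×ˢ Icc a₃ b₃ ⊆ O ∧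
      ContDiffOn ℝ 2 (fun q : ℝ × ℝ × ℝ => V q.1 q.2.1 q.2.2) O)
    -- the Helmholtz equation on Ω
    (hHelm : ∀ x ∈ Ioo a₁ b₁, ∀ y ∈ Ioo a₂ b₂, ∀ z ∈ Ioo a₃ b₃,
      lap3 V x y z + 4 * (‖k‖ : ℂ) ^ 2 * V x y z
        = β x y z * Complex.exp (2 * I * (⟪k, vec3 x y z⟫ : ℝ))) :
    -- with φ(x) := e^{−2i⟨θ,x⟩},
    ∀ φ : ℝ → ℝ → ℝ → ℂ,
      (φ = fun x y z => Complex.exp (-2 * I * (⟪θ, vec3 x y z⟫ : ℝ))) →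
      (∫ x in a₁..b₁, ∫ y in a₂..b₂, ∫ z in a₃..b₃,
          β x y z * Complex.exp (2 * I * (⟪k - θ, vec3 x y z⟫ : ℝ)))
        = ((∫ y in a₂..b₂, ∫ z in a₃..b₃,
              dx3 V b₁ y z * φ b₁ y z - V b₁ y z * dx3 φ b₁ y z)
          - (∫ y in a₂..b₂, ∫ z in a₃..b₃,
              dx3 V a₁ y z * φ a₁ y z - V a₁ y z * dx3 φ a₁ y z)
          + ((∫ x in a₁..b₁, ∫ z in a₃..b₃,
              dy3 V x b₂ z * φ x b₂ z - V x b₂ z * dy3 φ x b₂ z)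
            - (∫ x in a₁..b₁, ∫ z in a₃..b₃,
              dy3 V x a₂ z * φ x a₂ z - V x a₂ z * dy3 φ x a₂ z))
          + ((∫ x in a₁..b₁, ∫ y in a₂..b₂,
              dz3 V x y b₃ * φ x y b₃ - V x y b₃ * dz3 φ x y b₃)
            - (∫ x in a₁..b₁, ∫ y in a₂..b₂,
              dz3 V x y a₃ * φ x y a₃ - V x y a₃ * dz3 φ x y a₃))) := by
  rintro φ rfl
  obtain ⟨O, hO, hbox, hV⟩ := hV
  rw [← uIcc_of_le h₁.le, ← uIcc_of_le h₂.le, ← uIcc_of_le h₃.le] at hbox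
  rw [← integral3_lap3_mul_sub_mul_lap3 hO hbox hV (contDiff_cexp_inner_vec3 _ θ).contDiffOn]
  refine integral_congr_Ioo_of_le h₁.le fun x hx => integral_congr_Ioo_of_le h₂.le fun y hy =>
    integral_congr_Ioo_of_le h₃.le fun z hz => ?_
  have hexp : cexp (2 * I * (⟪k - θ, vec3 x y z⟫ : ℝ))
      = cexp (2 * I * (⟪k, vec3 x y z⟫ : ℝ)) * cexp (-2 * I * (⟪θ, vec3 x y z⟫ : ℝ)) := by
    rw [← exp_add, inner_sub_left, ofReal_sub]
    ring_nf
  rw [hexp, ← mul_assoc, ← hHelm x hx y hy z hz, lap3_cexp_inner_vec3, hkθ]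
  linear_combination
    (4 * (‖k‖ : ℂ) ^ 2 * V x y z * cexp (-2 * I * (⟪θ, vec3 x y z⟫ : ℝ))) * I_sq

/-- Green's identity for the Helmholtz equation
ΔV + 4‖k‖²V = β e^{2i⟨k,x⟩} on an open rectangular box Ω, with φ(x) = e^{−2i⟨θ,x⟩},
‖θ‖ = ‖k‖:  ∫_Ω β e^{2i⟨k−θ,x⟩} dx = ∫_{∂Ω} (∂_ν V·φ − V·∂_ν φ) dS. -/
theorem stmt_12 (a₁ b₁ a₂ b₂ a₃ b₃ : ℝ)
    (h₁ : a₁ < b₁) (h₂ : a₂ < b₂) (h₃ : a₃ < b₃)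
    (k θ : EuclideanSpace ℝ (Fin 3)) (hkθ : ‖θ‖ = ‖k‖)
    (β : ℝ → ℝ → ℝ → ℂ)
    (hβ_cont : Continuous fun q : ℝ × ℝ × ℝ => β q.1 q.2.1 q.2.2)
    (V : ℝ → ℝ → ℝ → ℂ)
    -- V is C² on a neighborhood of closure(Ω)
    (hV : ∃ O : Set (ℝ × ℝ × ℝ), IsOpen O ∧
      Icc a₁ b₁ ×ˢ Icc a₂ b₂ ×ˢ Icc a₃ b₃ ⊆ O ∧
      ContDiffOn ℝ 2 (fun q : ℝ × ℝ × ℝ => V q.1 q.2.1 q.2.2) O)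
    -- the Helmholtz equation on Ω
    (hHelm : ∀ x ∈ Ioo a₁ b₁, ∀ y ∈ Ioo a₂ b₂, ∀ z ∈ Ioo a₃ b₃,
      lap3 V x y z + 4 * (‖k‖ : ℂ) ^ 2 * V x y z
        = β x y z * Complex.exp (2 * I * (⟪k, vec3 x y z⟫ : ℝ))) :
    -- with φ(x) := e^{−2i⟨θ,x⟩},
    ∀ φ : ℝ → ℝ → ℝ → ℂ,
      (φ = fun x y z => Complex.exp (-2 * I * (⟪θ, vec3 x y z⟫ : ℝ))) →
      (∫ x in a₁..b₁, ∫ y in a₂..b₂, ∫ z in a₃..b₃,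
          β x y z * Complex.exp (2 * I * (⟪k - θ, vec3 x y z⟫ : ℝ)))
        = ((∫ y in a₂..b₂, ∫ z in a₃..b₃,
              dx3 V b₁ y z * φ b₁ y z - V b₁ y z * dx3 φ b₁ y z)
          - (∫ y in a₂..b₂, ∫ z in a₃..b₃,
              dx3 V a₁ y z * φ a₁ y z - V a₁ y z * dx3 φ a₁ y z)
          + ((∫ x in a₁..b₁, ∫ z in a₃..b₃,
              dy3 V x b₂ z * φ x b₂ z - V x b₂ z * dy3 φ x b₂ z)
            - (∫ x in a₁..b₁, ∫ z in a₃..b₃,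
              dy3 V x a₂ z * φ x a₂ z - V x a₂ z * dy3 φ x a₂ z))
          + ((∫ x in a₁..b₁, ∫ y in a₂..b₂,
              dz3 V x y b₃ * φ x y b₃ - V x y b₃ * dz3 φ x y b₃)
            - (∫ x in a₁..b₁, ∫ y in a₂..b₂,
              dz3 V x y a₃ * φ x y a₃ - V x y a₃ * dz3 φ x y a₃))) :=
  stmt_12_general a₁ b₁ a₂ b₂ a₃ b₃ h₁ h₂ h₃ k θ hkθ β V hV hHelm
end

section
/- Let k be a nonzero real number, L > 0, and set R := [−L/2, L/2] × [−L/2, L/2] ⊂ ℝ². Let β : ℝ² → ℂ be continuous, and let v, φ : ℝ² → ℂ be twice continuously differentiable on a neighborhood of R and satisfy: (i) ∂ₓv + (1/(4ik))·∂²_y v = β on R; (ii) ∂ₓφ + (1/(4ik))·∂²_y φ = 0 on R; (iii) v(−L/2, y) = 0 for all y ∈ [−L/2, L/2]; (iv) v(x, ±L/2) = 0 and φ(x, ±L/2) = 0 for all x ∈ [−L/2, L/2]. Then ∫_{−L/2}^{L/2} v(L/2, y) · conj(φ(L/2, y)) dy = ∫_{−L/2}^{L/2} ∫_{−L/2}^{L/2}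 β(x,y) · conj(φ(x,y)) dy dx. -/
/-!
The identity is the divergence theorem on the square for the field
`(v φ̄, c (∂_y v φ̄ - v ∂_y φ̄))` with `c = 1 / (4ik)`. Since `c` is purely imaginary, the mixed
terms `∂_y v ∂_y φ̄` cancel and the divergence is `(∂ₓv + c ∂²_y v) φ̄ + v conj (∂ₓφ + c ∂²_y φ)`,
which is `β φ̄` by the two equations. The boundary conditions kill the flux through every side of
the square except `x = L/2`.
-/

open Set Complex intervalIntegral

/-- Partial derivative in the first variable of g : ℝ² → ℂ. -/
noncomputable def dX (g : ℝ → ℝ → ℂ) (x y : ℝ) : ℂ :=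
  deriv (fun s => g s y) x

/-- Second partial derivative in the second variable of g : ℝ² → ℂ. -/
noncomputable def dYY (g : ℝ → ℝ → ℂ) (x y : ℝ) : ℂ :=
  deriv (fun s => deriv (fun s' => g x s') s) y

open ComplexConjugate MeasureTheory
open scoped Interval

section PlaneCalculus

variable {E : Type*} [NormedAddCommGroup E] [NormedSpace ℝ E]

noncomputable def partialX (f : ℝ × ℝ → E) (p : ℝ × ℝ) : E := fderiv ℝ f p (1, 0)

noncomputable def partialY (f : ℝ × ℝ → E) (p : ℝ × ℝ) : E := fderiv ℝ f p (0, 1)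

theorem hasDerivAt_partialX {f : ℝ × ℝ → E} {x y : ℝ} (hf : DifferentiableAt ℝ f (x, y)) :
    HasDerivAt (fun s => f (s, y)) (partialX f (x, y)) x :=
  hf.hasFDerivAt.comp_hasDerivAt x ((hasDerivAt_id x).prodMk (hasDerivAt_const x y))

theorem hasDerivAt_partialY {f : ℝ × ℝ → E} {x y : ℝ} (hf : DifferentiableAt ℝ f (x, y)) :
    HasDerivAt (fun t => f (x, t)) (partialY f (x, y)) y :=
  hf.hasFDerivAt.comp_hasDerivAt y ((hasDerivAt_const y x).prodMk (hasDerivAt_id y))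

theorem ContDiffOn.partialY {f : ℝ × ℝ → E} {O : Set (ℝ × ℝ)} {n : WithTop ℕ∞}
    (hf : ContDiffOn ℝ (n + 1) f O) (hO : IsOpen O) : ContDiffOn ℝ n (partialY f) O :=
  (hf.fderiv_of_isOpen hO le_rfl).clm_apply contDiffOn_const

theorem integral2_divergence_prod_of_contDiffOn [CompleteSpace E] {f g : ℝ × ℝ → E}
    {O : Set (ℝ × ℝ)} (hO : IsOpen O) (hf : ContDiffOn ℝ 1 f O) (hg : ContDiffOn ℝ 1 g O)
    {a₁ b₁ a₂ b₂ : ℝ} (hR : [[a₁, b₁]] ×ˢ [[a₂, b₂]] ⊆ O) :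
    (∫ x in a₁..b₁, ∫ y in a₂..b₂, partialX f (x, y) + partialY g (x, y)) =
      (((∫ x in a₁..b₁, g (x, b₂)) - ∫ x in a₁..b₁, g (x, a₂)) + ∫ y in a₂..b₂, f (b₁, y)) -
        ∫ y in a₂..b₂, f (a₁, y) := by
  have hint : Ioo (min a₁ b₁) (max a₁ b₁) ×ˢ Ioo (min a₂ b₂) (max a₂ b₂) ⊆ O :=
    (prod_mono Ioo_subset_Icc_self Ioo_subset_Icc_self).trans hR
  refine integral2_divergence_prod_of_hasFDerivAt f g (fderiv ℝ f) (fderiv ℝ g) a₁ a₂ b₁ b₂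
    (hf.continuousOn.mono hR) (hg.continuousOn.mono hR)
    (fun p hp => ((hf.contDiffAt (hO.mem_nhds (hint hp))).differentiableAt one_ne_zero).hasFDerivAt)
    (fun p hp => ((hg.contDiffAt (hO.mem_nhds (hint hp))).differentiableAt one_ne_zero).hasFDerivAt)
    ?_
  refine ContinuousOn.integrableOn_compact (isCompact_uIcc.prod isCompact_uIcc) ?_
  exact (((hf.continuousOn_fderiv_of_isOpen hO le_rfl).clm_apply continuousOn_const).add
    ((hg.continuousOn_fderiv_of_isOpen hO le_rfl).clm_apply continuousOn_const)).mono hR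

theorem integral2_divergence_prod_of_contDiffOn_eq_right_side [CompleteSpace E] {f g : ℝ × ℝ → E}
    {O : Set (ℝ × ℝ)} (hO : IsOpen O) (hf : ContDiffOn ℝ 1 f O) (hg : ContDiffOn ℝ 1 g O)
    {a₁ b₁ a₂ b₂ : ℝ} (hR : [[a₁, b₁]] ×ˢ [[a₂, b₂]] ⊆ O)
    (hf_left : ∀ y ∈ [[a₂, b₂]], f (a₁, y) = 0) (hg_bot : ∀ x ∈ [[a₁, b₁]], g (x, a₂) = 0)
    (hg_top : ∀ x ∈ [[a₁, b₁]], g (x, b₂) = 0) :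
    (∫ x in a₁..b₁, ∫ y in a₂..b₂, partialX f (x, y) + partialY g (x, y)) =
      ∫ y in a₂..b₂, f (b₁, y) := by
  rw [integral2_divergence_prod_of_contDiffOn hO hf hg hR, integral_congr hf_left,
    integral_congr hg_bot, integral_congr hg_top]
  simp

end PlaneCalculus

theorem dX_eq_partialX {v : ℝ → ℝ → ℂ} {x y : ℝ}
    (hv : DifferentiableAt ℝ (Function.uncurry v) (x, y)) :
    dX v x y = partialX (Function.uncurry v) (x, y) :=
  (hasDerivAt_partialX hv).deriv

theorem dYY_eq_partialY_partialY {v : ℝ → ℝ → ℂ} {O : Set (ℝ × ℝ)} (hO : IsOpen O)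
    (hv : ContDiffOn ℝ 2 (Function.uncurry v) O) {x y : ℝ} (hp : (x, y) ∈ O) :
    dYY v x y = partialY (partialY (Function.uncurry v)) (x, y) := by
  have hline : ∀ᶠ t in nhds y, (x, t) ∈ O :=
    (continuous_const.prodMk continuous_id).continuousAt.preimage_mem_nhds (hO.mem_nhds hp)
  have hinner : (fun t => deriv (fun s => v x s) t) =ᶠ[nhds y]
      fun t => partialY (Function.uncurry v) (x, t) := by
    filter_upwards [hline] with t ht
    exact (hasDerivAt_partialY
      ((hv.contDiffAt (hO.mem_nhds ht)).differentiableAt two_ne_zero)).deriv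
  rw [dYY, hinner.deriv_eq]
  exact (hasDerivAt_partialY
    (((hv.partialY (n := 1) hO).contDiffAt (hO.mem_nhds hp)).differentiableAt one_ne_zero)).deriv

theorem DifferentiableAt.mul_conj {F : Type*} [NormedAddCommGroup F] [NormedSpace ℝ F]
    {V Φ : F → ℂ} {q : F} (hV : DifferentiableAt ℝ V q) (hΦ : DifferentiableAt ℝ Φ q) :
    DifferentiableAt ℝ (fun p => V p * conj (Φ p)) q :=
  hV.mul hΦ.star

theorem ContDiffOn.mul_conj {F : Type*} [NormedAddCommGroup F] [NormedSpace ℝ F]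
    {V Φ : F → ℂ} {s : Set F} {n : WithTop ℕ∞} (hV : ContDiffOn ℝ n V s)
    (hΦ : ContDiffOn ℝ n Φ s) : ContDiffOn ℝ n (fun p => V p * conj (Φ p)) s :=
  hV.mul (conjCLE.contDiff.comp_contDiffOn hΦ)

theorem fderiv_mul_conj_apply {F : Type*} [NormedAddCommGroup F] [NormedSpace ℝ F]
    {V Φ : F → ℂ} {q : F} (hV : DifferentiableAt ℝ V q) (hΦ : DifferentiableAt ℝ Φ q) (w : F) :
    fderiv ℝ (fun p => V p * conj (Φ p)) q w =
      fderiv ℝ V q w * conj (Φ q) + V q * conj (fderiv ℝ Φ q w) := by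
  have hstar : (fun p => V p * conj (Φ p)) = fun p => V p * star (Φ p) := rfl
  rw [hstar, fderiv_fun_mul hV hΦ.star, fderiv_star]
  simp only [RCLike.star_def, add_apply, smul_apply,
    ContinuousLinearMap.comp_apply, ContinuousLinearEquiv.coe_coe, starL'_apply, smul_eq_mul]
  ring

noncomputable def paraxialFluxY (c : ℂ) (V Φ : ℝ × ℝ → ℂ) (p : ℝ × ℝ) : ℂ :=
  c * (partialY V p * conj (Φ p) - V p * conj (partialY Φ p))

theorem ContDiffOn.paraxialFluxY {V Φ : ℝ × ℝ → ℂ} {O : Set (ℝ × ℝ)} (hO : IsOpen O)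
    (hV : ContDiffOn ℝ 2 V O) (hΦ : ContDiffOn ℝ 2 Φ O) (c : ℂ) :
    ContDiffOn ℝ 1 (paraxialFluxY c V Φ) O :=
  contDiffOn_const.mul (((hV.partialY hO).mul_conj (hΦ.of_le one_le_two)).sub
    ((hV.of_le one_le_two).mul_conj (hΦ.partialY hO)))

theorem partialX_mul_conj_add_partialY_paraxialFluxY {V Φ : ℝ × ℝ → ℂ} {c : ℂ}
    (hc : conj c = -c) {q : ℝ × ℝ} (hV : DifferentiableAt ℝ V q) (hΦ : DifferentiableAt ℝ Φ q)
    (hVy : DifferentiableAt ℝ (partialY V) q) (hΦy : DifferentiableAt ℝ (partialY Φ) q) :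
    partialX (fun p => V p * conj (Φ p)) q + partialY (paraxialFluxY c V Φ) q =
      (partialX V q + c * partialY (partialY V) q) * conj (Φ q) +
        V q * conj (partialX Φ q + c * partialY (partialY Φ) q) := by
  have hx : partialX (fun p => V p * conj (Φ p)) q =
      partialX V q * conj (Φ q) + V q * conj (partialX Φ q) :=
    fderiv_mul_conj_apply hV hΦ _
  have hy : partialY (paraxialFluxY c V Φ) q =
      c * ((partialY (partialY V) q * conj (Φ q) + partialY V q * conj (partialY Φ q)) -
        (partialY V q * conj (partialY Φ q) + V q * conj (partialY (partialY Φ) q))) := by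
    rw [partialY]
    unfold paraxialFluxY
    rw [fderiv_const_mul ((hVy.mul_conj hΦ).fun_sub (hV.mul_conj hΦy)),
      fderiv_fun_sub (hVy.mul_conj hΦ) (hV.mul_conj hΦy)]
    simp only [smul_apply, sub_apply, smul_eq_mul, fderiv_mul_conj_apply hVy hΦ,
      fderiv_mul_conj_apply hV hΦy]
    rfl
  rw [hx, hy, map_add, map_mul, hc]
  ring

theorem partialX_mul_conj_add_partialY_paraxialFluxY_of_eq {v φ β : ℝ → ℝ → ℂ} {c : ℂ}
    (hc : conj c = -c) {O : Set (ℝ × ℝ)} (hO : IsOpen O)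
    (hv : ContDiffOn ℝ 2 (Function.uncurry v) O) (hφ : ContDiffOn ℝ 2 (Function.uncurry φ) O)
    {x y : ℝ} (hp : (x, y) ∈ O) (hvβ : dX v x y + c * dYY v x y = β x y)
    (hφ0 : dX φ x y + c * dYY φ x y = 0) :
    partialX (fun p => Function.uncurry v p * conj (Function.uncurry φ p)) (x, y) +
        partialY (paraxialFluxY c (Function.uncurry v) (Function.uncurry φ)) (x, y) =
      β x y * conj (φ x y) := by
  have hv₁ := (hv.contDiffAt (hO.mem_nhds hp)).differentiableAt two_ne_zero
  have hφ₁ := (hφ.contDiffAt (hO.mem_nhds hp)).differentiableAt two_ne_zero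
  rw [partialX_mul_conj_add_partialY_paraxialFluxY hc hv₁ hφ₁
    (((hv.partialY (n := 1) hO).contDiffAt (hO.mem_nhds hp)).differentiableAt one_ne_zero)
    (((hφ.partialY (n := 1) hO).contDiffAt (hO.mem_nhds hp)).differentiableAt one_ne_zero),
    ← dX_eq_partialX hv₁, ← dX_eq_partialX hφ₁, ← dYY_eq_partialY_partialY hO hv hp,
    ← dYY_eq_partialY_partialY hO hφ hp, hvβ, hφ0, map_zero, mul_zero, add_zero]
  rfl

theorem stmt_13_general (k : ℝ) (L : ℝ) (hL : 0 < L)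
    (β : ℝ → ℝ → ℂ)
    (v φ : ℝ → ℝ → ℂ)
    -- v and φ are C² on a neighborhood of R
    (hv : ∃ O : Set (ℝ × ℝ), IsOpen O ∧
      Icc (-L / 2) (L / 2) ×ˢ Icc (-L / 2) (L / 2) ⊆ O ∧
      ContDiffOn ℝ 2 (fun q : ℝ × ℝ => v q.1 q.2) O)
    (hφ : ∃ O : Set (ℝ × ℝ), IsOpen O ∧
      Icc (-L / 2) (L / 2) ×ˢ Icc (-L / 2) (L / 2) ⊆ O ∧
      ContDiffOn ℝ 2 (fun q : ℝ × ℝ => φ q.1 q.2) O)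
    -- (i) the forward equation for v on R
    (hi : ∀ x ∈ Icc (-L / 2) (L / 2), ∀ y ∈ Icc (-L / 2) (L / 2),
      dX v x y + 1 / (4 * I * k) * dYY v x y = β x y)
    -- (ii) the homogeneous equation for φ on R
    (hii : ∀ x ∈ Icc (-L / 2) (L / 2), ∀ y ∈ Icc (-L / 2) (L / 2),
      dX φ x y + 1 / (4 * I * k) * dYY φ x y = 0)
    -- (iii) v vanishes on the inflow side x = −L/2
    (hiii : ∀ y ∈ Icc (-L / 2) (L / 2), v (-L / 2) y = 0)
    -- (iv) v and φ vanish on the lateral sides y = ±L/2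
    (hiv : ∀ x ∈ Icc (-L / 2) (L / 2),
      v x (L / 2) = 0 ∧ v x (-L / 2) = 0 ∧ φ x (L / 2) = 0 ∧ φ x (-L / 2) = 0) :
    (∫ y in (-L / 2)..(L / 2), v (L / 2) y * (starRingEnd ℂ) (φ (L / 2) y))
      = ∫ x in (-L / 2)..(L / 2), ∫ y in (-L / 2)..(L / 2),
          β x y * (starRingEnd ℂ) (φ x y) := by
  obtain ⟨O₁, hO₁, hRO₁, hv⟩ := hv
  obtain ⟨O₂, hO₂, hRO₂, hφ⟩ := hφ
  have hc : conj (1 / (4 * I * k) : ℂ) = -(1 / (4 * I * k)) := by simp [map_ofNat]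
  have hI : [[-L / 2, L / 2]] = Icc (-L / 2) (L / 2) := uIcc_of_le (by linarith)
  have hR : [[-L / 2, L / 2]] ×ˢ [[-L / 2, L / 2]] ⊆ O₁ ∩ O₂ := by
    rw [hI]
    exact subset_inter hRO₁ hRO₂
  have hvO : ContDiffOn ℝ 2 (Function.uncurry v) (O₁ ∩ O₂) := hv.mono inter_subset_left
  have hφO : ContDiffOn ℝ 2 (Function.uncurry φ) (O₁ ∩ O₂) := hφ.mono inter_subset_right
  have hdiv := integral2_divergence_prod_of_contDiffOn_eq_right_side (hO₁.inter hO₂)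
    ((hvO.of_le one_le_two).mul_conj (hφO.of_le one_le_two))
    (hvO.paraxialFluxY (hO₁.inter hO₂) hφO (1 / (4 * I * k))) hR
    (fun y hy => by simp [hiii y (hI ▸ hy)])
    (fun x hx => by simp [paraxialFluxY, (hiv x (hI ▸ hx)).2.1, (hiv x (hI ▸ hx)).2.2.2])
    (fun x hx => by simp [paraxialFluxY, (hiv x (hI ▸ hx)).1, (hiv x (hI ▸ hx)).2.2.1])
  refine hdiv.symm.trans (integral_congr fun x hx => integral_congr fun y hy => ?_)
  rw [hI] at hx hy
  exact partialX_mul_conj_add_partialY_paraxialFluxY_of_eq hc (hO₁.inter hO₂) hvO hφO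
    (subset_inter hRO₁ hRO₂ ⟨hx, hy⟩) (hi x hx y hy) (hii x hx y hy)

/-- adjoint identity for the one-way (paraxial) wave equation on the
square R = [−L/2, L/2]²:  if ∂ₓv + (1/(4ik))∂²_y v = β and ∂ₓφ + (1/(4ik))∂²_y φ = 0
on R, with v vanishing on the inflow side and v, φ vanishing on the lateral sides, then
∫ v(L/2,y) conj(φ(L/2,y)) dy = ∫∫ β conj(φ) dy dx. -/
theorem stmt_13 (k : ℝ) (hk : k ≠ 0) (L : ℝ) (hL : 0 < L)
    (β : ℝ → ℝ → ℂ)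
    (hβ_cont : Continuous fun q : ℝ × ℝ => β q.1 q.2)
    (v φ : ℝ → ℝ → ℂ)
    -- v and φ are C² on a neighborhood of R
    (hv : ∃ O : Set (ℝ × ℝ), IsOpen O ∧
      Icc (-L / 2) (L / 2) ×ˢ Icc (-L / 2) (L / 2) ⊆ O ∧
      ContDiffOn ℝ 2 (fun q : ℝ × ℝ => v q.1 q.2) O)
    (hφ : ∃ O : Set (ℝ × ℝ), IsOpen O ∧
      Icc (-L / 2) (L / 2) ×ˢ Icc (-L / 2) (L / 2) ⊆ O ∧
      ContDiffOn ℝ 2 (fun q : ℝ × ℝ => φ q.1 q.2) O)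
    -- (i) the forward equation for v on R
    (hi : ∀ x ∈ Icc (-L / 2) (L / 2), ∀ y ∈ Icc (-L / 2) (L / 2),
      dX v x y + 1 / (4 * I * k) * dYY v x y = β x y)
    -- (ii) the homogeneous equation for φ on R
    (hii : ∀ x ∈ Icc (-L / 2) (L / 2), ∀ y ∈ Icc (-L / 2) (L / 2),
      dX φ x y + 1 / (4 * I * k) * dYY φ x y = 0)
    -- (iii) v vanishes on the inflow side x = −L/2
    (hiii : ∀ y ∈ Icc (-L / 2) (L / 2), v (-L / 2) y = 0)
    -- (iv) v and φ vanish on the lateral sides y = ±L/2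
    (hiv : ∀ x ∈ Icc (-L / 2) (L / 2),
      v x (L / 2) = 0 ∧ v x (-L / 2) = 0 ∧ φ x (L / 2) = 0 ∧ φ x (-L / 2) = 0) :
    (∫ y in (-L / 2)..(L / 2), v (L / 2) y * (starRingEnd ℂ) (φ (L / 2) y))
      = ∫ x in (-L / 2)..(L / 2), ∫ y in (-L / 2)..(L / 2),
          β x y * (starRingEnd ℂ) (φ x y) :=
  stmt_13_general k L hL β v φ hv hφ hi hii hiii hiv
end

section
/- Let f : ℝ³ → ℝ be continuous with compact support. If for every point x ∈ ℝ³ and every unit vector v ∈ ℝ³ the line integral ∫_ℝ f(x + t·v) dt equals zero, then f is identically zero. (Injectivity of the X-ray transform on compactly supported continuous functions on ℝ³.) -/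
/-!
Every value `𝓕 f ξ` of the Fourier transform is an integral that Fubini computes along lines in a
direction `v ⟂ ξ`, which exists since the dimension is at least two. On such a line the
character `x ↦ 𝐞 (-⟪x, ξ⟫)` is constant, so each inner integral is a multiple of a vanishing
line integral of `f`. Hence `𝓕 f = 0`, and Fourier inversion gives `f = 0`.
-/

open MeasureTheory Module
open scoped RealInnerProductSpace FourierTransform

variable {F : Type*} [NormedAddCommGroup F] [NormedSpace ℝ F]

theorem integral_eq_zero_of_forall_integral_add_smul_single_eq_zero {n : ℕ}
    {φ : (Fin (n + 1) → ℝ) → F} (hφ : Integrable φ)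
    (h : ∀ x, ∫ t : ℝ, φ (x + t • Pi.single 0 1) = 0) : ∫ x, φ x = 0 := by
  set e := (MeasurableEquiv.piFinSuccAbove (fun _ : Fin (n + 1) => ℝ) 0).symm
  have he : MeasurePreserving e (volume.prod volume) volume :=
    (volume_preserving_piFinSuccAbove (fun _ : Fin (n + 1) => ℝ) 0).symm
  have he_apply (t : ℝ) (z : Fin n → ℝ) : e (t, z) = Fin.cons 0 z + t • Pi.single 0 1 := by
    ext i
    induction i using Fin.cases <;> simp [e, MeasurableEquiv.piFinSuccAbove]
  rw [← he.integral_comp', integral_prod_symm (fun p => φ (e p))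
    ((he.integrable_comp_emb e.measurableEmbedding).2 hφ)]
  simp only [he_apply, h, integral_zero]

section InnerProductSpace

variable {E : Type*} [NormedAddCommGroup E] [InnerProductSpace ℝ E] [FiniteDimensional ℝ E]

theorem exists_orthonormalBasis_apply_zero_eq {n : ℕ} (hn : finrank ℝ E = n + 1)
    {v : E} (hv : ‖v‖ = 1) : ∃ b : OrthonormalBasis (Fin (n + 1)) ℝ E, b 0 = v := by
  have hv' : Orthonormal ℝ (({0} : Set (Fin (n + 1))).domRestrict fun _ => v) :=
    orthonormal_subsingleton_iff.2 fun _ => hv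
  obtain ⟨b, hb⟩ := hv'.exists_orthonormalBasis_extension_of_card_eq (by simpa using hn)
  exact ⟨b, hb 0 rfl⟩

theorem exists_norm_eq_one_inner_eq_zero (hE : 2 ≤ finrank ℝ E) (ξ : E) :
    ∃ v : E, ‖v‖ = 1 ∧ ⟪v, ξ⟫ = 0 := by
  have hrank : 0 < finrank ℝ (ℝ ∙ ξ)ᗮ := by
    have := (ℝ ∙ ξ).finrank_add_finrank_orthogonal
    have : finrank ℝ (ℝ ∙ ξ) ≤ 1 := by simpa using finrank_span_le_card ({ξ} : Set E)
    omega
  obtain ⟨⟨w, hw⟩, hw_ne⟩ := finrank_pos_iff_exists_ne_zero.1 hrank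
  have hw0 : w ≠ 0 := by simpa using hw_ne
  refine ⟨‖w‖⁻¹ • w, norm_smul_inv_norm hw0, ?_⟩
  rw [real_inner_smul_left, Submodule.mem_orthogonal_singleton_iff_inner_left.1 hw, mul_zero]

variable [MeasurableSpace E] [BorelSpace E]

theorem integral_eq_zero_of_forall_integral_add_smul_eq_zero {φ : E → F} (hφ : Integrable φ)
    {v : E} (hv : ‖v‖ = 1) (h : ∀ x, ∫ t : ℝ, φ (x + t • v) = 0) : ∫ x, φ x = 0 := by
  obtain ⟨n, hn⟩ : ∃ n, finrank ℝ E = n + 1 :=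
    Nat.exists_eq_succ_of_ne_zero (finrank_pos_iff_exists_ne_zero.2
      ⟨v, norm_ne_zero_iff.1 (by simp [hv])⟩).ne'
  obtain ⟨b, hb⟩ := exists_orthonormalBasis_apply_zero_eq hn hv
  set e := (MeasurableEquiv.toLp 2 (Fin (n + 1) → ℝ)).trans b.measurableEquiv.symm
  have he : MeasurePreserving e :=
    (PiLp.volume_preserving_toLp _).trans b.measurePreserving_measurableEquiv.symm
  have he_apply (x : Fin (n + 1) → ℝ) (t : ℝ) : e (x + t • Pi.single 0 1) = e x + t • v := by
    have : e = b.repr.symm ∘ WithLp.toLp 2 := rfl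
    simp [this, hb]
  rw [← he.integral_comp']
  refine integral_eq_zero_of_forall_integral_add_smul_single_eq_zero
    ((he.integrable_comp_emb e.measurableEmbedding).2 hφ) fun x => ?_
  simpa [he_apply] using h (e x)

variable {G : Type*} [NormedAddCommGroup G] [NormedSpace ℂ G]

theorem fourier_eq_zero_of_forall_integral_add_smul_eq_zero (hE : 2 ≤ finrank ℝ E)
    {f : E → G} (hf : Integrable f) (h : ∀ x v : E, ‖v‖ = 1 → ∫ t : ℝ, f (x + t • v) = 0) :
    𝓕 f = 0 := by
  funext ξ
  obtain ⟨v, hv, hvξ⟩ := exists_norm_eq_one_inner_eq_zero hE ξ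
  refine integral_eq_zero_of_forall_integral_add_smul_eq_zero
    ((Real.fourierIntegral_convergent_iff ξ).2 hf) hv fun x => ?_
  simp only [innerₗ_apply_apply, inner_add_left, real_inner_smul_left, hvξ, mul_zero, add_zero,
    Circle.smul_def]
  rw [integral_smul, h x v hv, smul_zero]

theorem eq_zero_of_forall_integral_add_smul_eq_zero [CompleteSpace G] (hE : 2 ≤ finrank ℝ E)
    {f : E → G} (hc : Continuous f) (hf : Integrable f)
    (h : ∀ x v : E, ‖v‖ = 1 → ∫ t : ℝ, f (x + t • v) = 0) : f = 0 := by
  have hF := fourier_eq_zero_of_forall_integral_add_smul_eq_zero hE hf h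
  rw [← hc.fourierInv_fourier_eq hf (by rw [hF]; exact integrable_zero _ _ _), hF]
  funext ξ
  simp [Real.fourierInv_eq]

end InnerProductSpace

/-- injectivity of the X-ray transform on continuous compactly supported
functions on ℝ³: if all line integrals of f vanish, then f ≡ 0. -/
theorem stmt_14 (f : EuclideanSpace ℝ (Fin 3) → ℝ)
    (hf : Continuous f) (hsupp : HasCompactSupport f)
    (h : ∀ (x v : EuclideanSpace ℝ (Fin 3)), ‖v‖ = 1 →
      (∫ t : ℝ, f (x + t • v)) = 0) :
    f = 0 := by
  have hℂ : (fun x => (f x : ℂ)) = 0 :=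
    eq_zero_of_forall_integral_add_smul_eq_zero (by simp) (by fun_prop)
      (hf.integrable_of_hasCompactSupport hsupp).ofReal fun x v hv => by
        rw [integral_complex_ofReal, h x v hv, Complex.ofReal_zero]
  funext x
  simpa using congrFun hℂ x
end
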